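/- arXiv:2011.11774 — 13 statements merged into one kernel-verified Lean document; each statement's English description precedes it below -/
import Mathlib

section
/- Let T be a phylogenetic tree with leaf set N. Then every subset A ⊆ N occurs as a part of the partition induced by at most one non-leaf vertex of T. -/
/-!
The part of a non-leaf `v` along an edge `vu` is the set of leaves in the branch of `vu`: the
vertices closer to `u` than to `v`. Suppose `v ≠ w` have the same part along `vv'` and `ww'`.
Since `v` has degree at least three, some branch at `v` avoids both `v'` and `w`; a leaf `j` in
it lies outside the part, and as the path from `w` to `j` runs through `v`, the edge `ww'` cannot
point towards `v`. Symmetrically `vv'` does not point towards `w`. For a leaf `i` of the common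
part the paths from `w` to `i` and from `v` to `i` then run through `v` and `w` respectively,
i.e. `d(w,i) = d(w,v) + d(v,i)` and `d(v,i) = d(v,w) + d(w,i)`, so `d(v,w) = 0`.
-/

/-- A phylogenetic tree with leaf set `N`: a tree without degree-2 vertices whose
leaves (degree-1 vertices) are exactly the elements of `N`. -/
def IsPhyloTree {V : Type*} (G : SimpleGraph V) (N : Set V) : Prop :=
  G.IsTree ∧ (∀ v : V, (G.neighborSet v).ncard ≠ 2) ∧
    ∀ v : V, v ∈ N ↔ (G.neighborSet v).ncard = 1

/-- `partSet G N v e` is the set of leaves `i ∈ N` such that the (unique) path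
from `v` to `i` begins with the edge `e`. -/
def partSet {V : Type*} (G : SimpleGraph V) (N : Set V) (v : V) (e : Sym2 V) : Set V :=
  {i | i ∈ N ∧ ∃ p : G.Path v i, p.1.edges.head? = some e}

lemma Set.exists_ne_ne_of_two_lt_ncard {α : Type*} {s : Set α} (hs : 2 < s.ncard) (a b : α) :
    ∃ c ∈ s, c ≠ a ∧ c ≠ b := by
  have := Set.le_ncard_sdiff {a} s
  rw [Set.ncard_singleton] at this
  obtain ⟨c, hc, hcb⟩ := Set.exists_ne_of_one_lt_ncard (s := s \ {a}) (by omega) b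
  exact ⟨c, hc.1, hc.2, hcb⟩

namespace SimpleGraph

variable {V : Type*} {G : SimpleGraph V} {a b c c' i u v v' w w' x y : V}

/-- For an edge `vu` of a tree, `G.branch v u` is the vertex set of the component of `G - vu`
containing `u`. -/
def branch (G : SimpleGraph V) (v u : V) : Set V := {x | G.dist x u + 1 = G.dist x v}

@[simp]
lemma mem_branch : x ∈ G.branch v u ↔ G.dist x u + 1 = G.dist x v := Iff.rfl

lemma notMem_branch_swap (hx : x ∈ G.branch v u) : x ∉ G.branch u v := by
  simp only [mem_branch] at *
  omega

lemma reachable_of_mem_branch (hx : x ∈ G.branch v u) : G.Reachable x v :=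
  Reachable.of_dist_ne_zero (by rw [mem_branch] at hx; omega)

lemma Adj.mem_branch_of_dist_lt (hadj : G.Adj v u) (h : G.dist x u < G.dist x v) :
    x ∈ G.branch v u := by
  rw [mem_branch]
  rcases hadj.diff_dist_adj (u := x) with h' | h' | h' <;> omega

lemma Walk.dist_add_dist_le_length [DecidableEq V] (p : G.Walk a b) (hu : u ∈ p.support) :
    G.dist a u + G.dist u b ≤ p.length := by
  have hsplit := congrArg Walk.length (p.take_spec hu)
  rw [Walk.length_append] at hsplit
  exact hsplit ▸ Nat.add_le_add (dist_le _) (dist_le _)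

lemma IsAcyclic.length_eq_dist (hG : G.IsAcyclic) {p : G.Walk a b} (hp : p.IsPath) :
    p.length = G.dist a b := by
  obtain ⟨q, hq, hlen⟩ := p.reachable.exists_path_of_dist
  rw [← hlen, Subtype.mk.inj ((hG.subsingleton_path a b).elim ⟨p, hp⟩ ⟨q, hq⟩)]

lemma IsAcyclic.mem_branch_iff_mem_support (hG : G.IsAcyclic) (hadj : G.Adj v u)
    {p : G.Walk x v} (hp : p.IsPath) : x ∈ G.branch v u ↔ u ∈ p.support := by
  classical
  have mem_branch_of_mem_support {y z : V} (hyz : G.Adj y z) {q : G.Walk x y} (hq : q.IsPath)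
      (hz : z ∈ q.support) : x ∈ G.branch y z := by
    have hsplit := congrArg Walk.length (q.take_spec hz)
    rw [Walk.length_append, hG.length_eq_dist (hq.takeUntil hz),
      hG.length_eq_dist (hq.dropUntil hz), hG.length_eq_dist hq,
      dist_eq_one_iff_adj.mpr hyz.symm] at hsplit
    exact hsplit
  refine ⟨fun hx => ?_, mem_branch_of_mem_support hadj hp⟩
  by_contra hu
  exact notMem_branch_swap hx (mem_branch_of_mem_support hadj.symm (hp.concat hu hadj) (by simp))

lemma IsAcyclic.head?_edges_eq_iff_mem_support (hG : G.IsAcyclic) (hadj : G.Adj v u)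
    {p : G.Walk v x} (hp : p.IsPath) : p.edges.head? = some s(v, u) ↔ u ∈ p.support := by
  cases p with
  | nil => simp [hadj.ne.symm]
  | cons h q =>
    rw [Walk.edges_cons, List.head?_cons, Option.some_inj, Sym2.congr_right]
    refine ⟨by rintro rfl; simp, fun hu => ?_⟩
    simpa using (hG.eq_snd_of_adj_start hp hadj hu).symm

lemma IsTree.mem_branch_or_mem_branch (hG : G.IsTree) (hadj : G.Adj v u) (x : V) :
    x ∈ G.branch v u ∨ x ∈ G.branch u v :=
  (hG.dist_eq_dist_add_one_of_adj x hadj).imp Eq.symm Eq.symm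

lemma IsAcyclic.eq_of_mem_branch (hG : G.IsAcyclic) (hc : G.Adj v c) (hc' : G.Adj v c')
    (hx : x ∈ G.branch v c) (hx' : x ∈ G.branch v c') : c = c' := by
  obtain ⟨p, hp, -⟩ := (reachable_of_mem_branch hx).exists_path_of_dist
  rw [hG.eq_penultimate_of_adj_end hp hc ((hG.mem_branch_iff_mem_support hc hp).mp hx),
    hG.eq_penultimate_of_adj_end hp hc' ((hG.mem_branch_iff_mem_support hc' hp).mp hx')]

lemma IsAcyclic.exists_walk_notMem_support (hG : G.IsAcyclic) (hadj : G.Adj v u)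
    (hx : x ∈ G.branch u v) : ∃ q : G.Walk x v, u ∉ q.support := by
  obtain ⟨q, hq, -⟩ :=
    ((reachable_of_mem_branch hx).trans hadj.reachable.symm).exists_path_of_dist
  exact ⟨q, fun hu => notMem_branch_swap hx ((hG.mem_branch_iff_mem_support hadj hq).mpr hu)⟩

/-- Each edge of a forest is a bridge, so a walk between its two branches must cross it. -/
lemma IsAcyclic.mem_edges_of_mem_branch (hG : G.IsAcyclic) (hadj : G.Adj v u)
    (hx : x ∈ G.branch u v) (hy : y ∈ G.branch v u) (p : G.Walk x y) : s(v, u) ∈ p.edges := by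
  obtain ⟨q, hq⟩ := hG.exists_walk_notMem_support hadj hx
  obtain ⟨r, hr⟩ := hG.exists_walk_notMem_support hadj.symm hy
  have hbridge :=
    isBridge_iff_forall_walk_mem_edges.mp (isAcyclic_iff_forall_adj_isBridge.mp hG hadj)
  by_contra hp
  have hcross := hbridge ((q.reverse.append p).append r)
  simp only [Walk.edges_append, Walk.edges_reverse, List.mem_append, List.mem_reverse] at hcross
  rcases hcross with (hq' | hp') | hr'
  · exact hq (q.snd_mem_support_of_mem_edges hq')
  · exact hp hp'
  · exact hr (r.fst_mem_support_of_mem_edges hr')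

lemma IsTree.dist_eq_dist_add_dist_of_mem_branch (hG : G.IsTree) (hadj : G.Adj v u)
    (hx : x ∈ G.branch u v) (hy : y ∈ G.branch v u) : G.dist x y = G.dist x v + G.dist v y := by
  classical
  obtain ⟨p, hp⟩ := hG.connected.exists_walk_length_eq_dist x y
  refine le_antisymm hG.connected.dist_triangle ?_
  rw [← hp]
  exact p.dist_add_dist_le_length
    (p.fst_mem_support_of_mem_edges (hG.isAcyclic.mem_edges_of_mem_branch hadj hx hy p))

lemma Connected.exists_adj_mem_branch (hG : G.Connected) (hne : x ≠ v) :
    ∃ y, G.Adj x y ∧ v ∈ G.branch x y := by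
  obtain ⟨p, hp⟩ := hG.exists_walk_length_eq_dist x v
  cases p with
  | nil => exact absurd rfl hne
  | @cons _ y _ h q =>
    refine ⟨y, h, ?_⟩
    have hq := dist_le q
    have htri := hG.dist_triangle (u := x) (v := y) (w := v)
    rw [Walk.length_cons] at hp
    rw [dist_eq_one_iff_adj.mpr h] at htri
    rw [mem_branch, dist_comm, dist_comm (u := v)]
    omega

lemma IsTree.exists_mem_branch_ncard_neighborSet_eq_one [Finite V] (hG : G.IsTree)
    (hadj : G.Adj v u) : ∃ j ∈ G.branch v u, (G.neighborSet j).ncard = 1 := by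
  have hu : u ∈ G.branch v u := by simp [dist_eq_one_iff_adj.mpr hadj.symm]
  -- a vertex of the branch farthest from `v` is a leaf
  obtain ⟨j, hj, hmax⟩ := Set.exists_max_image _ (G.dist · v) (Set.toFinite _) ⟨u, hu⟩
  refine ⟨j, hj, ?_⟩
  have hjv : j ≠ v := by rintro rfl; simp at hj
  obtain ⟨y, hjy, hvy⟩ := hG.connected.exists_adj_mem_branch hjv
  by_contra hdeg
  have hpos := (Set.ncard_pos (s := G.neighborSet j) (Set.toFinite _)).mpr ⟨y, hjy⟩
  obtain ⟨x, hjx, hxy⟩ := Set.exists_ne_of_one_lt_ncard (s := G.neighborSet j) (by omega) y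
  have hvx : v ∈ G.branch x j := (hG.mem_branch_or_mem_branch hjx v).resolve_left
    fun h => hxy (hG.isAcyclic.eq_of_mem_branch hjx hjy h hvy)
  have hx : x ∈ G.branch v u := by
    have h₁ := hG.connected.dist_triangle (u := x) (v := j) (w := u)
    have h₂ := hG.connected.dist_triangle (u := x) (v := u) (w := v)
    rw [dist_eq_one_iff_adj.mpr (hjx : G.Adj j x).symm] at h₁
    rw [dist_eq_one_iff_adj.mpr hadj.symm] at h₂
    have := G.dist_comm (u := v) (v := j)
    have := G.dist_comm (u := v) (v := x)
    rw [mem_branch] at hj hvx ⊢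
    omega
  have := hmax x hx
  have := G.dist_comm (u := v) (v := j)
  have := G.dist_comm (u := v) (v := x)
  rw [mem_branch] at hvx
  omega

lemma IsTree.notMem_branch_of_inter_branch_subset [Finite V] (hG : G.IsTree) {N : Set V}
    (hleaf : ∀ z, (G.neighborSet z).ncard = 1 → z ∈ N) (hv : 2 < (G.neighborSet v).ncard)
    (hvv' : G.Adj v v') (hww' : G.Adj w w') (hsub : N ∩ G.branch w w' ⊆ G.branch v v') :
    v ∉ G.branch w w' := by
  obtain ⟨a, ha⟩ : ∃ a, ∀ c, G.Adj v c → w ∈ G.branch v c → c = a := by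
    by_cases h : ∃ a, G.Adj v a ∧ w ∈ G.branch v a
    · obtain ⟨a, hva, hwa⟩ := h
      exact ⟨a, fun c hvc hwc => hG.isAcyclic.eq_of_mem_branch hvc hva hwc hwa⟩
    · exact ⟨v, fun c hvc hwc => absurd ⟨c, hvc, hwc⟩ h⟩
  obtain ⟨c, hvc, hcv', hca⟩ := Set.exists_ne_ne_of_two_lt_ncard hv v' a
  obtain ⟨j, hj, hjdeg⟩ := hG.exists_mem_branch_ncard_neighborSet_eq_one hvc
  have hjw : j ∉ G.branch w w' := fun hj' =>
    hcv' (hG.isAcyclic.eq_of_mem_branch hvc hvv' hj (hsub ⟨hleaf j hjdeg, hj'⟩))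
  have hwc : w ∈ G.branch c v := (hG.mem_branch_or_mem_branch hvc w).resolve_left
    fun h => hca (ha c hvc h)
  have hglue := hG.dist_eq_dist_add_dist_of_mem_branch hvc hwc hj
  refine fun hvw => hjw (hww'.mem_branch_of_dist_lt ?_)
  have htri := hG.connected.dist_triangle (u := j) (v := v) (w := w')
  have := G.dist_comm (u := j) (v := v)
  have := G.dist_comm (u := j) (v := w)
  have := G.dist_comm (u := w) (v := v)
  rw [mem_branch] at hvw
  omega

lemma IsTree.eq_of_mem_branch_of_notMem_branch (hG : G.IsTree) (hvv' : G.Adj v v')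
    (hww' : G.Adj w w') (hv : v ∉ G.branch w w') (hw : w ∉ G.branch v v')
    (hi : i ∈ G.branch v v') (hi' : i ∈ G.branch w w') : v = w := by
  have h₁ := hG.dist_eq_dist_add_dist_of_mem_branch hvv'
    ((hG.mem_branch_or_mem_branch hvv' w).resolve_left hw) hi
  have h₂ := hG.dist_eq_dist_add_dist_of_mem_branch hww'
    ((hG.mem_branch_or_mem_branch hww' v).resolve_left hv) hi'
  have := G.dist_comm (u := v) (v := w)
  exact hG.connected.dist_eq_zero_iff.mp (by omega)

end SimpleGraph

open SimpleGraph

lemma partSet_eq_inter_branch {V : Type*} {G : SimpleGraph V} {N : Set V} {v u : V}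
    (hG : G.IsTree) (hadj : G.Adj v u) : partSet G N v s(v, u) = N ∩ G.branch v u := by
  ext x
  obtain ⟨p, hp, -⟩ := hG.connected.exists_path_of_dist v x
  have hpath (q : G.Path v x) : q = ⟨p, hp⟩ := (hG.isAcyclic.subsingleton_path v x).elim q _
  rw [partSet, Set.mem_ofPred, Set.mem_inter_iff,
    hG.isAcyclic.mem_branch_iff_mem_support hadj hp.reverse, Walk.support_reverse,
    List.mem_reverse, ← hG.isAcyclic.head?_edges_eq_iff_mem_support hadj hp]
  exact and_congr_right fun _ =>
    ⟨fun ⟨q, hq⟩ => by rwa [hpath q] at hq, fun h => ⟨⟨p, hp⟩, h⟩⟩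

lemma IsPhyloTree.two_lt_ncard_neighborSet {V : Type*} [Finite V] {G : SimpleGraph V}
    {N : Set V} {v u : V} (h : IsPhyloTree G N) (hv : v ∉ N) (hadj : G.Adj v u) :
    2 < (G.neighborSet v).ncard := by
  obtain ⟨-, hdeg₂, hleaf⟩ := h
  have hpos := (Set.ncard_pos (s := G.neighborSet v) (Set.toFinite _)).mpr ⟨u, hadj⟩
  have hdeg₁ : (G.neighborSet v).ncard ≠ 1 := fun h₁ => hv ((hleaf v).mpr h₁)
  have := hdeg₂ v
  omega

lemma exists_adj_eq_of_mem_incidenceSet {V : Type*} {G : SimpleGraph V} {v : V} {e : Sym2 V}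
    (he : e ∈ G.incidenceSet v) : ∃ u, G.Adj v u ∧ e = s(v, u) := by
  obtain ⟨u, rfl⟩ := Sym2.mem_iff_exists.mp he.2
  exact ⟨u, he.1, rfl⟩

theorem stmt4_general {V : Type*} [Fintype V] (G : SimpleGraph V) (N : Set V)
    (h : IsPhyloTree G N) (v w : V) (hv : v ∉ N) (hw : w ∉ N)
    (e : Sym2 V) (he : e ∈ G.incidenceSet v) (f : Sym2 V) (hf : f ∈ G.incidenceSet w)
    (hpart : partSet G N v e = partSet G N w f) : v = w := by
  have ⟨hG, _, hleaf⟩ := h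
  obtain ⟨v', hvv', rfl⟩ := exists_adj_eq_of_mem_incidenceSet he
  obtain ⟨w', hww', rfl⟩ := exists_adj_eq_of_mem_incidenceSet hf
  rw [partSet_eq_inter_branch hG hvv', partSet_eq_inter_branch hG hww'] at hpart
  have hleaf' (z : V) : (G.neighborSet z).ncard = 1 → z ∈ N := (hleaf z).mpr
  have hvw := hG.notMem_branch_of_inter_branch_subset hleaf' (h.two_lt_ncard_neighborSet hv hvv')
    hvv' hww' (hpart.symm.subset.trans Set.inter_subset_right)
  have hwv := hG.notMem_branch_of_inter_branch_subset hleaf' (h.two_lt_ncard_neighborSet hw hww')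
    hww' hvv' (hpart.subset.trans Set.inter_subset_right)
  obtain ⟨i, hi, hideg⟩ := hG.exists_mem_branch_ncard_neighborSet_eq_one hvv'
  have hi' : i ∈ N ∩ G.branch w w' := hpart ▸ ⟨hleaf' i hideg, hi⟩
  exact hG.eq_of_mem_branch_of_notMem_branch hvv' hww' hvw hwv hi hi'.2

/-- every subset `A ⊆ N` occurs as a part of the partition induced by at
most one non-leaf vertex. -/
theorem stmt4 {V : Type*} [Fintype V] (G : SimpleGraph V) (N : Set V)
    (h : IsPhyloTree G N) (hN : 3 ≤ N.ncard) (v w : V) (hv : v ∉ N) (hw : w ∉ N)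
    (e : Sym2 V) (he : e ∈ G.incidenceSet v) (f : Sym2 V) (hf : f ∈ G.incidenceSet w)
    (hpart : partSet G N v e = partSet G N w f) : v = w :=
  stmt4_general G N h v w hv hw e he f hf hpart
end

section
/- Let P be a phylogenetic collection of partitions of N, and define the graph G_P with vertex set N ∪ P, where p, q ∈ P are adjacent iff there is a set A with A ∈ p and N\A ∈ q, a vertex p ∈ P is adjacent to i ∈ N iff {i} ∈ p, and no two vertices of N are adjacent. Then G_P is connected. -/
open Set

/-- A phylogenetic collection of partitions of (the finite set) `α`:
(P1) every partition has at least 3 parts; (P2) every singleton is a part of some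
partition; (P3) every subset is a part of at most one partition; (P4) the complement of
every part of cardinality at least 2 is also a part of some partition. -/
def IsPhyloP {α : Type*} (P : Set (Set (Set α))) : Prop :=
  (∀ p ∈ P, Setoid.IsPartition p ∧ 3 ≤ p.ncard) ∧
  (∀ i : α, ∃ p ∈ P, ({i} : Set α) ∈ p) ∧
  (∀ A : Set α, ∀ p ∈ P, ∀ q ∈ P, A ∈ p → A ∈ q → p = q) ∧
  (∀ p ∈ P, ∀ A ∈ p, 2 ≤ A.ncard → ∃ q ∈ P, Aᶜ ∈ q)

/-- The adjacency relation of the graph `G_P` on the vertex set `N ∪ P`: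
two partitions `p, q` are adjacent iff there is a set `A` with `A ∈ p` and `N \ A ∈ q`;
a partition `p` and an element `i` are adjacent iff `{i} ∈ p`; no two elements of `N`
are adjacent. -/
def GPAdj {α : Type*} (P : Set (Set (Set α))) : α ⊕ ↥P → α ⊕ ↥P → Prop
  | Sum.inl _, Sum.inl _ => False
  | Sum.inl i, Sum.inr p => ({i} : Set α) ∈ p.1
  | Sum.inr p, Sum.inl i => ({i} : Set α) ∈ p.1
  | Sum.inr p, Sum.inr q => p ≠ q ∧ ∃ A : Set α, A ∈ p.1 ∧ Aᶜ ∈ q.1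

/-- The graph `G_P` with vertex set `N ∪ P`. -/
def GP {α : Type*} (P : Set (Set (Set α))) : SimpleGraph (α ⊕ ↥P) where
  Adj := GPAdj P
  symm := by
    constructor
    rintro (i | p) (j | q) h
    · exact h.elim
    · exact h
    · exact h
    · obtain ⟨hne, A, hA, hAc⟩ := h
      exact ⟨hne.symm, Aᶜ, hAc, by rwa [compl_compl]⟩
  loopless := by
    constructor
    rintro (i | p) h
    · exact h
    · exact h.1 rfl

/-
Every partition `p ∈ P` is joined to every element `i` lying in a part `A` of `p`, by induction
on `A`: if `A = {i}` the two vertices are adjacent; otherwise (P4) yields `q ∋ Aᶜ`, adjacent to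
`p`, and the part `B` of `q` containing `i` is disjoint from `Aᶜ` and different from `A` by (P3),
so `B ⊂ A`. As each element is adjacent to some partition (P2), every vertex is joined to a fixed
element of `N`.
-/

namespace Setoid.IsPartition

variable {α : Type*} {c : Set (Set α)}

theorem compl_notMem_of_three_le_ncard (hc : IsPartition c) (h3 : 3 ≤ c.ncard) {A : Set α}
    (hA : A ∈ c) : Aᶜ ∉ c := by
  intro hAc
  have hsub : c ⊆ {A, Aᶜ} := by
    intro C hC
    obtain ⟨x, hx⟩ := nonempty_iff_ne_empty.mpr fun h => hc.1 (h ▸ hC)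
    by_cases hxA : x ∈ A
    · exact Or.inl (eq_of_mem_eqv_class hc.2 hC hx hA hxA)
    · exact Or.inr (eq_of_mem_eqv_class hc.2 hC hx hAc hxA)
  have h2 : ({A, Aᶜ} : Set (Set α)).ncard ≤ 2 := (ncard_insert_le _ _).trans (by simp)
  have := ncard_le_ncard hsub ((finite_singleton _).insert _)
  omega

theorem subset_of_compl_mem (hc : IsPartition c) {A B : Set α} (hAc : Aᶜ ∈ c) (hB : B ∈ c)
    {i : α} (hiA : i ∈ A) (hiB : i ∈ B) : B ⊆ A := by
  intro x hxB
  by_contra hxA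
  have hBA : B = Aᶜ := eq_of_mem_eqv_class hc.2 hB hxB hAc hxA
  exact (hBA ▸ hiB) hiA

end Setoid.IsPartition

namespace IsPhyloP

variable {α : Type*} {P : Set (Set (Set α))}

theorem reachable_inr_inl_of_mem [Finite α] (hP : IsPhyloP P) (p : P) {A : Set α} (hA : A ∈ p.1)
    {i : α} (hiA : i ∈ A) : (GP P).Reachable (Sum.inr p) (Sum.inl i) := by
  induction A using WellFoundedLT.induction generalizing p with
  | _ A ih =>
    obtain hsing | hnontriv := A.subsingleton_or_nontrivial
    · have hadj : (GP P).Adj (Sum.inr p) (Sum.inl i) := by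
        change {i} ∈ p.1
        rwa [← hsing.eq_singleton_of_mem hiA]
      exact hadj.reachable
    have hA2 : 2 ≤ A.ncard := one_lt_ncard_iff_nontrivial.mpr hnontriv
    obtain ⟨hpart, h3⟩ := hP.1 p.1 p.2
    obtain ⟨q, hqP, hAcq⟩ := hP.2.2.2 p.1 p.2 A hA hA2
    have hpq : p.1 ≠ q := fun h => hpart.compl_notMem_of_three_le_ncard h3 hA (h ▸ hAcq)
    have hadj : (GP P).Adj (Sum.inr p) (Sum.inr ⟨q, hqP⟩) :=
      ⟨fun h => hpq (congrArg Subtype.val h), A, hA, hAcq⟩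
    obtain ⟨B, ⟨hBq, hiB⟩, -⟩ := (hP.1 q hqP).1.2 i
    have hBA : B ⊂ A := by
      refine ssubset_of_subset_of_ne ((hP.1 q hqP).1.subset_of_compl_mem hAcq hBq hiA hiB) ?_
      rintro rfl
      exact hpq (hP.2.2.1 B p.1 p.2 q hqP hA hBq)
    exact hadj.reachable.trans (ih B hBA ⟨q, hqP⟩ hBq hiB)

theorem reachable_inl [Finite α] (hP : IsPhyloP P) (i : α) (v : α ⊕ P) :
    (GP P).Reachable v (Sum.inl i) := by
  have reachable_inr (p : P) : (GP P).Reachable (Sum.inr p) (Sum.inl i) := by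
    obtain ⟨A, ⟨hA, hiA⟩, -⟩ := (hP.1 p.1 p.2).1.2 i
    exact hP.reachable_inr_inl_of_mem p hA hiA
  rcases v with j | p
  · obtain ⟨p, hpP, hjp⟩ := hP.2.1 j
    have hadj : (GP P).Adj (Sum.inl j) (Sum.inr ⟨p, hpP⟩) := hjp
    exact hadj.reachable.trans (reachable_inr ⟨p, hpP⟩)
  · exact reachable_inr p

end IsPhyloP

/-- for a phylogenetic collection of partitions `P`, the graph `G_P` is
connected. -/
theorem stmt6 {α : Type*} [Fintype α] (hcard : 3 ≤ Fintype.card α)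
    (P : Set (Set (Set α))) (hP : IsPhyloP P) : (GP P).Connected := by
  obtain ⟨i₀⟩ : Nonempty α := Fintype.card_pos_iff.mp (by omega)
  exact (SimpleGraph.connected_iff_exists_forall_reachable _).mpr
    ⟨Sum.inl i₀, fun v => (hP.reachable_inl i₀ v).symm⟩
end

section
/- Let P be a phylogenetic collection of partitions of N, and define the graph G_P with vertex set N ∪ P as follows: p, q ∈ P are adjacent iff there is a set A with A ∈ p and N\A ∈ q; p ∈ P and i ∈ N are adjacent iff {i} ∈ p; no two elements of N are adjacent. Then G_P is acyclic. -/
/-!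
Orient the edges of `G_P`. An edge from a partition `p` to a partition `q` comes with a part
`S` of `q` such that `Sᶜ` is a part of `p`: the elements on `p`'s side of the edge. Continuing
from `q` to `r ≠ p` with the set `T`, the parts `S` and `Tᶜ` of `q` differ by (P3), so they are
disjoint and `S ⊆ T`; again by (P3) `S ≠ T`. An element vertex `i` has only one neighbour, the
unique partition containing `{i}`. Hence these sets strictly increase along every
non-backtracking walk, which is impossible around a cycle.
-/

open Set

section Acyclic

variable {V β : Type*} {G : SimpleGraph V}

theorem SimpleGraph.isAcyclic_of_forall_adj_adj_lt [Preorder β] (f : V → V → β)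
    (hf : ∀ ⦃x y z⦄, G.Adj x y → G.Adj y z → x ≠ z → f x y < f y z) : G.IsAcyclic := by
  let g : G.Dart → β := fun d => f d.fst d.snd
  have hturn : ∀ ⦃d d' : G.Dart⦄, G.DartAdj d d' → d.edge ≠ d'.edge → g d < g d' := by
    rintro ⟨⟨x, y⟩, hxy⟩ ⟨⟨y', z⟩, hyz⟩ (rfl : y = y') hne
    refine hf hxy hyz fun (hxz : x = z) => hne ?_
    subst hxz
    exact Sym2.eq_swap
  intro v c hc
  have hedges : c.darts.Pairwise (·.edge ≠ ·.edge) :=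
    List.pairwise_map.mp (c.edges_eq_map_darts ▸ hc.edges_nodup)
  have hsorted : (c.darts.map g).Pairwise (· < ·) := by
    rw [← List.isChain_iff_pairwise, List.isChain_map, List.isChain_iff_getElem]
    exact fun i hi => hturn (List.isChain_iff_getElem.mp c.isChain_dartAdj_darts i hi)
      (List.isChain_iff_getElem.mp hedges.isChain i hi)
  cases c with
  | nil => exact hc.ne_nil rfl
  | cons h w =>
    have hw : ¬ w.Nil := fun hnil => h.ne hnil.eq.symm
    rw [SimpleGraph.Walk.darts_cons, List.map_cons, List.pairwise_cons] at hsorted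
    rw [SimpleGraph.Walk.darts_cons, List.pairwise_cons] at hedges
    have hlast := w.lastDart_mem_darts hw
    exact lt_asymm (hsorted.1 _ (List.mem_map_of_mem hlast))
      (hturn rfl (hedges.1 _ hlast).symm)

end Acyclic

namespace IsPhyloP

variable {α : Type*} {P : Set (Set (Set α))}

lemma isPartition (hP : IsPhyloP P) (p : P) : Setoid.IsPartition p.1 :=
  (hP.1 p p.2).1

lemma eq_of_mem (hP : IsPhyloP P) {A : Set α} {p q : P} (hp : A ∈ p.1) (hq : A ∈ q.1) :
    p = q :=
  Subtype.ext (hP.2.2.1 A p p.2 q q.2 hp hq)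

end IsPhyloP

namespace GP

variable {α : Type*} {P : Set (Set (Set α))}

/-- For adjacent partitions `p, q`, `side P p q` is a part of `q` whose complement is a part of
`p`. Edges at an element vertex get the extreme values `∅` (leaving it) and `univ` (entering it). -/
noncomputable def side (P : Set (Set (Set α))) : α ⊕ P → α ⊕ P → Set α
  | Sum.inl _, _ => ∅
  | Sum.inr _, Sum.inl _ => univ
  | Sum.inr p, Sum.inr q =>
      open scoped Classical in if h : ∃ A ∈ q.1, Aᶜ ∈ p.1 then h.choose else ∅

lemma side_mem {p q : P} (h : (GP P).Adj (Sum.inr p) (Sum.inr q)) :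
    side P (Sum.inr p) (Sum.inr q) ∈ q.1 ∧ (side P (Sum.inr p) (Sum.inr q))ᶜ ∈ p.1 := by
  obtain ⟨-, A, hAp, hAq⟩ := h
  have hex : ∃ B ∈ q.1, Bᶜ ∈ p.1 := ⟨Aᶜ, hAq, by rwa [compl_compl]⟩
  simp only [side, dif_pos hex]
  exact hex.choose_spec

lemma side_ssubset_side_of_inr (hP : IsPhyloP P) {p q r : P}
    (hpq : (GP P).Adj (Sum.inr p) (Sum.inr q)) (hqr : (GP P).Adj (Sum.inr q) (Sum.inr r))
    (hpr : p ≠ r) : side P (Sum.inr p) (Sum.inr q) ⊂ side P (Sum.inr q) (Sum.inr r) := by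
  obtain ⟨hSq, hSp⟩ := side_mem hpq
  obtain ⟨hTr, hTq⟩ := side_mem hqr
  set S := side P (Sum.inr p) (Sum.inr q)
  set T := side P (Sum.inr q) (Sum.inr r)
  have hST : S ≠ Tᶜ := fun h =>
    hpr (hP.eq_of_mem (by rwa [h, compl_compl] at hSp) hTr)
  have hsub : S ⊆ T :=
    disjoint_compl_right_iff_subset.mp ((hP.isPartition q).pairwiseDisjoint hSq hTq hST)
  exact hsub.ssubset_of_ne fun h => hqr.1 (hP.eq_of_mem hSq (h ▸ hTr))

lemma side_ssubset (hP : IsPhyloP P) {x y z : α ⊕ P} (hxy : (GP P).Adj x y)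
    (hyz : (GP P).Adj y z) (hxz : x ≠ z) : side P x y ⊂ side P y z := by
  rcases x with i | p <;> rcases y with j | q <;> rcases z with k | r
  · exact hxy.elim
  · exact hxy.elim
  · exact empty_ssubset.mpr ⟨i, mem_univ i⟩
  · exact empty_ssubset.mpr
      (Setoid.nonempty_of_mem_partition (hP.isPartition r) (side_mem hyz).1)
  · exact hyz.elim
  · exact (hxz (congrArg Sum.inr (hP.eq_of_mem hxy hyz))).elim
  · exact ssubset_univ_iff_nonempty_compl.mpr
      (Setoid.nonempty_of_mem_partition (hP.isPartition p) (side_mem hxy).2)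
  · exact side_ssubset_side_of_inr hP hxy hyz fun h => hxz (congrArg Sum.inr h)

end GP

theorem stmt7_general {α : Type*} (P : Set (Set (Set α))) (hP : IsPhyloP P) : (GP P).IsAcyclic :=
  SimpleGraph.isAcyclic_of_forall_adj_adj_lt (GP.side P) fun _ _ _ => GP.side_ssubset hP

/-- for a phylogenetic collection of partitions `P`, the graph `G_P` is
acyclic. -/
theorem stmt7 {α : Type*} [Fintype α] (hcard : 3 ≤ Fintype.card α)
    (P : Set (Set (Set α))) (hP : IsPhyloP P) : (GP P).IsAcyclic :=
  stmt7_general P hP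
end

section
/- Let C be a phylogenetic set of cuts of N and let A be a cluster (one side of a cut) of C. Then the collection of all clusters and singletons of N that are subsets of A, partially ordered by inclusion, has a Hasse diagram that is a tree (i.e., connected and acyclic). -/
open Set

/-- A phylogenetic set of cuts of `α`, where a cut `(A | Aᶜ)` is represented by the
cluster `A`: every cluster and its complement have cardinality at least 2, the set of
clusters is closed under complement (cuts are unordered), and axiom (C) holds: for any
two cuts, at least one of the four pairwise intersections of their sides is empty. -/
def IsCutSet {α : Type*} (C : Set (Set α)) : Prop :=
  (∀ A ∈ C, 2 ≤ A.ncard ∧ 2 ≤ Aᶜ.ncard ∧ Aᶜ ∈ C) ∧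
  ∀ A ∈ C, ∀ B ∈ C, A ∩ B = ∅ ∨ A ∩ Bᶜ = ∅ ∨ Aᶜ ∩ B = ∅ ∨ Aᶜ ∩ Bᶜ = ∅

/-- `VA C X` is the set of all clusters of `C` and singletons of `α` that are
subsets of `X`. -/
def VA {α : Type*} (C : Set (Set α)) (X : Set α) : Set (Set α) :=
  {S | (S ∈ C ∨ ∃ i : α, S = {i}) ∧ S ⊆ X}

/-- `covIn C X S T` says that `T` covers `S` in the inclusion poset `VA C X`. -/
def covIn {α : Type*} (C : Set (Set α)) (X : Set α) (S T : Set α) : Prop :=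
  S ∈ VA C X ∧ T ∈ VA C X ∧ S ⊂ T ∧ ∀ U ∈ VA C X, ¬(S ⊂ U ∧ U ⊂ T)

/-- The Hasse diagram of the inclusion poset `VA C X`, as an undirected graph. -/
def hasse {α : Type*} (C : Set (Set α)) (X : Set α) : SimpleGraph ↥(VA C X) where
  Adj S T := covIn C X S.1 T.1 ∨ covIn C X T.1 S.1
  symm := ⟨fun S T h => h.symm⟩
  loopless := ⟨by
    rintro S (h | h) <;> exact ssubset_irrefl _ h.2.2.1⟩

/-!
Clusters and singletons inside a cluster `A` form a laminar family, so the elements above any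
member form a chain. In a finite poset with a top element and this property, following upper
covers leads every element to the top, and each element has at most one upper cover, so the
covers form a rooted tree: every Hasse edge `a ⋖ b` is a bridge, as nothing reachable from `a`
without it leaves `↓a`.
-/

section TreeOrder

variable {P : Type*} [PartialOrder P]

theorem CovBy.le_of_lt_of_isChain_Ici {a b c : P} (hab : a ⋖ b) (hac : a < c)
    (hchain : IsChain (· ≤ ·) (Ici a)) : b ≤ c := by
  rcases hchain.total hab.le hac.le with hbc | hcb
  · exact hbc
  · rcases hcb.lt_or_eq with hcb | rfl
    · exact absurd hcb (hab.2 hac)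
    · exact le_rfl

theorem SimpleGraph.hasse_connected_of_le {t : P} [WellFoundedGT P] [IsStronglyAtomic P]
    (ht : ∀ a, a ≤ t) : (SimpleGraph.hasse P).Connected := by
  have reach_top : ∀ a, (SimpleGraph.hasse P).Reachable a t := by
    intro a
    induction a using WellFoundedGT.induction with
    | _ a ih =>
      rcases (ht a).lt_or_eq with hat | rfl
      · obtain ⟨b, hab, -⟩ := exists_covBy_le_of_lt hat
        exact (SimpleGraph.hasse_adj.mpr (Or.inl hab)).reachable.trans (ih b hab.lt)
      · rfl
  have : Nonempty P := ⟨t⟩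
  exact ⟨fun a b => (reach_top a).trans (reach_top b).symm⟩

theorem SimpleGraph.hasse_isBridge_of_isChain_Ici (hchain : ∀ a : P, IsChain (· ≤ ·) (Ici a))
    {a b : P} (hab : a ⋖ b) : (SimpleGraph.hasse P).IsBridge s(a, b) := by
  rw [SimpleGraph.isBridge_iff]
  intro hreach
  have le_of_reachable : ∀ {x}, ((SimpleGraph.hasse P).deleteEdges {s(a, b)}).Reachable a x →
      x ≤ a := by
    intro x hx
    rw [SimpleGraph.reachable_iff_reflTransGen] at hx
    induction hx with
    | refl => exact le_rfl
    | @tail x y _ hxy hxa =>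
      rw [SimpleGraph.deleteEdges_adj] at hxy
      obtain ⟨hxy | hyx, hne⟩ := hxy
      · rcases hxa.lt_or_eq with hxa | rfl
        · exact hxy.le_of_lt_of_isChain_Ici hxa (hchain x)
        · have hyb : y = b := le_antisymm (hxy.le_of_lt_of_isChain_Ici hab.lt (hchain x))
            (hab.le_of_lt_of_isChain_Ici hxy.lt (hchain x))
          exact absurd (mem_singleton_iff.mpr (by rw [hyb])) hne
      · exact hyx.le.trans hxa
  exact hab.lt.not_ge (le_of_reachable hreach)

theorem SimpleGraph.hasse_isAcyclic_of_isChain_Ici (hchain : ∀ a : P, IsChain (· ≤ ·) (Ici a)) :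
    (SimpleGraph.hasse P).IsAcyclic := by
  rw [SimpleGraph.isAcyclic_iff_forall_adj_isBridge]
  rintro a b (hab | hba)
  · exact SimpleGraph.hasse_isBridge_of_isChain_Ici hchain hab
  · rw [Sym2.eq_swap]
    exact SimpleGraph.hasse_isBridge_of_isChain_Ici hchain hba

end TreeOrder

theorem hasse_eq_simpleGraph_hasse {α : Type*} (C : Set (Set α)) (X : Set α) :
    hasse C X = SimpleGraph.hasse (VA C X) := by
  have covIn_iff : ∀ S T : VA C X, covIn C X S.1 T.1 ↔ S ⋖ T := fun S T =>
    ⟨fun h => ⟨h.2.2.1, fun U hSU hUT => h.2.2.2 U.1 U.2 ⟨hSU, hUT⟩⟩,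
      fun h => ⟨S.2, T.2, h.1, fun U hU hSUT => h.2 (c := ⟨U, hU⟩) hSUT.1 hSUT.2⟩⟩
  ext S T
  simp only [hasse, SimpleGraph.hasse_adj, covIn_iff]

namespace IsCutSet

variable {α : Type*} {C : Set (Set α)} {A : Set α}

theorem nonempty_of_mem_VA (hC : IsCutSet C) {S : Set α} (hS : S ∈ VA C A) : S.Nonempty := by
  rcases hS.1 with hSC | ⟨i, rfl⟩
  · exact nonempty_of_ncard_ne_zero (by have := (hC.1 S hSC).1; omega)
  · exact singleton_nonempty i

/-- The complements of two clusters inside `A` meet in `Aᶜ ≠ ∅`, so axiom (C) leaves them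
nested or disjoint. -/
theorem subset_or_subset_of_mem_VA (hC : IsCutSet C) (hA : A ∈ C) {S T : Set α}
    (hS : S ∈ VA C A) (hT : T ∈ VA C A) (hST : (S ∩ T).Nonempty) : S ⊆ T ∨ T ⊆ S := by
  rcases hS.1 with hSC | ⟨i, rfl⟩
  · rcases hT.1 with hTC | ⟨j, rfl⟩
    · obtain ⟨x, hx⟩ : Aᶜ.Nonempty :=
        nonempty_of_ncard_ne_zero (by have := (hC.1 A hA).2.1; omega)
      rcases hC.2 S hSC T hTC with h | h | h | h
      · exact absurd h hST.ne_empty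
      · exact Or.inl (disjoint_compl_right_iff_subset.mp (disjoint_iff_inter_eq_empty.mpr h))
      · exact Or.inr (disjoint_compl_left_iff_subset.mp (disjoint_iff_inter_eq_empty.mpr h))
      · exact absurd (h ▸ ⟨fun hxS => hx (hS.2 hxS), fun hxT => hx (hT.2 hxT)⟩ :
          x ∈ (∅ : Set α)) (notMem_empty x)
    · exact Or.inr (singleton_subset_iff.mpr (by simpa using hST))
  · exact Or.inl (singleton_subset_iff.mpr (by simpa using hST))

theorem isChain_Ici_VA (hC : IsCutSet C) (hA : A ∈ C) (S : VA C A) :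
    IsChain (· ≤ ·) (Ici S) := by
  intro T hST U hSU _
  obtain ⟨x, hx⟩ := hC.nonempty_of_mem_VA S.2
  exact hC.subset_or_subset_of_mem_VA hA T.2 U.2 ⟨x, hST hx, hSU hx⟩

end IsCutSet

theorem stmt9_general {α : Type*} [Fintype α]
    (C : Set (Set α)) (hC : IsCutSet C) (A : Set α) (hA : A ∈ C) :
    (hasse C A).Connected ∧ (hasse C A).IsAcyclic := by
  rw [hasse_eq_simpleGraph_hasse]
  have le_A : ∀ S : VA C A, S ≤ ⟨A, Or.inl hA, subset_rfl⟩ := fun S => S.2.2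
  exact ⟨SimpleGraph.hasse_connected_of_le le_A,
    SimpleGraph.hasse_isAcyclic_of_isChain_Ici (hC.isChain_Ici_VA hA)⟩

/-- for a cluster `A` of a phylogenetic set of cuts `C`, the Hasse diagram
of the poset of clusters and singletons contained in `A` is a tree (connected and
acyclic). -/
theorem stmt9 {α : Type*} [Fintype α] (hcard : 3 ≤ Fintype.card α)
    (C : Set (Set α)) (hC : IsCutSet C) (A : Set α) (hA : A ∈ C) :
    (hasse C A).Connected ∧ (hasse C A).IsAcyclic :=
  stmt9_general C hC A hA
end

section
/- Let C be a phylogenetic set of cuts of N. Define the crossing relation X_C by: (i,j|k,l) ∈ X_C iff i,j,k,l are pairwise distinct and there is a cut (A|B) ∈ C with i,j ∈ A and k,l ∈ B. Then X_C satisfies axiom (X1): if (i,j|k,l) ∈ X_C then (i,k|j,l) ∉ X_C. -/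
open Set

/-- The crossing relation induced by a set of cuts: `(i,j | k,l) ∈ X_C` iff
`i, j, k, l` are pairwise distinct and some cut `(A | Aᶜ) ∈ C` has `i, j ∈ A`
and `k, l ∈ Aᶜ`. -/
def XC {α : Type*} (C : Set (Set α)) (i j k l : α) : Prop :=
  i ≠ j ∧ i ≠ k ∧ i ≠ l ∧ j ≠ k ∧ j ≠ l ∧ k ≠ l ∧
    ∃ A ∈ C, i ∈ A ∧ j ∈ A ∧ k ∉ A ∧ l ∉ A

/-- the crossing relation induced by a phylogenetic set of cuts satisfies
axiom (X1): if `(i,j | k,l) ∈ X_C` then `(i,k | j,l) ∉ X_C`. -/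
theorem stmt11 {α : Type*} (C : Set (Set α)) (hC : IsCutSet C) :
    ∀ i j k l : α, XC C i j k l → ¬ XC C i k j l := by
  rintro i j k l ⟨-, -, -, -, -, -, A, hA, hiA, hjA, hkA, hlA⟩
      ⟨-, -, -, -, -, -, B, hB, hiB, hkB, hjB, hlB⟩
  rcases hC.2 A hA B hB with h | h | h | h
  · exact absurd h (by simp [Set.eq_empty_iff_forall_notMem]; exact ⟨i, hiA, hiB⟩)
  · exact absurd h (by simp [Set.eq_empty_iff_forall_notMem]; exact ⟨j, hjA, hjB⟩)
  · exact absurd h (by simp [Set.eq_empty_iff_forall_notMem]; exact ⟨k, hkA, hkB⟩)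
  · exact absurd h (by simp [Set.eq_empty_iff_forall_notMem]; exact ⟨l, hlA, hlB⟩)
end

section
/- Let C be a phylogenetic set of cuts of N and X_C the induced crossing relation ((i,j|k,l) ∈ X_C iff some cut (A|B) ∈ C has i,j ∈ A and k,l ∈ B). Then X_C satisfies axiom (X2): if (i,j|k,l) ∈ X_C and (i,j|k,m) ∈ X_C with l ≠ m, then (i,j|l,m) ∈ X_C. -/
open Set

/-- the crossing relation induced by a phylogenetic set of cuts satisfies
axiom (X2): if `(i,j | k,l) ∈ X_C` and `(i,j | k,m) ∈ X_C` with `l ≠ m`, then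
`(i,j | l,m) ∈ X_C`. -/
theorem stmt12 {α : Type*} [Fintype α] (C : Set (Set α)) (hC : IsCutSet C) :
    ∀ i j k l m : α, XC C i j k l → XC C i j k m → l ≠ m → XC C i j l m := by
  rintro i j k l m ⟨hij, _, hil, _, hjl, _, A, hA, hiA, hjA, hkA, hlA⟩
    ⟨_, _, him, _, hjm, _, B, hB, hiB, hjB, hkB, hmB⟩ hlm
  refine ⟨hij, hil, him, hjl, hjm, hlm, ?_⟩
  rcases hC.2 A hA B hB with h | h | h | h
  · exact absurd h (Set.nonempty_iff_ne_empty.mp ⟨i, hiA, hiB⟩)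
  · have hAB : A ⊆ B := fun x hx => by
      by_contra hxB
      exact absurd h (Set.nonempty_iff_ne_empty.mp ⟨x, hx, hxB⟩)
    exact ⟨A, hA, hiA, hjA, hlA, fun hmA => hmB (hAB hmA)⟩
  · have hBA : B ⊆ A := fun x hx => by
      by_contra hxA
      exact absurd h (Set.nonempty_iff_ne_empty.mp ⟨x, hxA, hx⟩)
    exact ⟨B, hB, hiB, hjB, fun hlB => hlA (hBA hlB), hmB⟩
  · exact absurd h (Set.nonempty_iff_ne_empty.mp ⟨k, hkA, hkB⟩)
end

section
/- Let X be a phylogenetic crossing relation on N and suppose (i,j|k,l) ∈ X. Then there exists a cut (A|B) of N with i,j ∈ A and k,l ∈ B that is compatible with X, i.e., for every pair of distinct a,b ∈ A and distinct c,d ∈ B we have (a,b|c,d) ∈ X. -/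
open Set

/-- `X` is a crossing relation on `α`: a set of unordered pairs of disjoint two-element
subsets of `α`, encoded as a quaternary relation that forces the four entries to be
pairwise distinct, and is invariant under swapping `i` with `j`, swapping `k` with `l`,
and swapping the pair `{i,j}` with the pair `{k,l}`. -/
def IsCrossRel {α : Type*} (X : α → α → α → α → Prop) : Prop :=
  (∀ i j k l, X i j k l → i ≠ j ∧ i ≠ k ∧ i ≠ l ∧ j ≠ k ∧ j ≠ l ∧ k ≠ l) ∧
  (∀ i j k l, X i j k l → X j i k l) ∧
  (∀ i j k l, X i j k l → X i j l k) ∧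
  (∀ i j k l, X i j k l → X k l i j)

/-- A phylogenetic crossing relation: a crossing relation satisfying axioms
(X1), (X2), (X3). -/
def IsPhyloX {α : Type*} (X : α → α → α → α → Prop) : Prop :=
  IsCrossRel X ∧
  (∀ i j k l, X i j k l → ¬ X i k j l) ∧
  (∀ i j k l m, X i j k l → X i j k m → l ≠ m → X i j l m) ∧
  (∀ i j k l m, X i j k l → m ≠ i → m ≠ j → m ≠ k → m ≠ l → (X i j k m ∨ X i m k l))

/-- A cut `(A | Aᶜ)` is compatible with `X` if `(a,b | c,d) ∈ X` for all distinct
`a, b ∈ A` and all distinct `c, d ∈ Aᶜ`. -/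
def Compatible {α : Type*} (X : α → α → α → α → Prop) (A : Set α) : Prop :=
  ∀ a b c d : α, a ∈ A → b ∈ A → a ≠ b → c ∉ A → d ∉ A → c ≠ d → X a b c d

/-- for a phylogenetic crossing relation `X` with `(i,j | k,l) ∈ X`,
there is a cut `(A | Aᶜ)` of `α` compatible with `X` such that `i, j ∈ A` and
`k, l ∈ Aᶜ`. -/
theorem stmt13 {α : Type*} [Fintype α] (hcard : 4 ≤ Fintype.card α)
    (X : α → α → α → α → Prop) (hX : IsPhyloX X) (i j k l : α) (h : X i j k l) :
    ∃ A : Set α, i ∈ A ∧ j ∈ A ∧ k ∉ A ∧ l ∉ A ∧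
      2 ≤ A.ncard ∧ 2 ≤ Aᶜ.ncard ∧ Compatible X A := by
  classical
  obtain ⟨⟨hdist, hsw1, hsw2, hsw3⟩, hX1, hX2, hX3⟩ := hX
  obtain ⟨hij, hik, hil, hjk, hjl, hkl⟩ := hdist i j k l h
  set A : Set α := {m | m = i ∨ X i m k l} with hA
  have hiA : i ∈ A := Or.inl rfl
  have hjA : j ∈ A := Or.inr h
  have hkA : k ∉ A := by
    rintro (rfl | hx)
    · exact hik rfl
    · exact (hdist i k k l hx).2.2.2.1 rfl
  have hlA : l ∉ A := by
    rintro (rfl | hx)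
    · exact hil rfl
    · exact (hdist i l k l hx).2.2.2.2.1 rfl
  -- Lemma B: for a ∈ A, a ≠ i, and c, d ∉ A distinct: X i a c d
  have hB : ∀ a, a ∈ A → a ≠ i → ∀ c d, c ∉ A → d ∉ A → c ≠ d → X i a c d := by
    intro a haA hai c d hcA hdA hcd
    have hxa : X i a k l := haA.resolve_left hai
    obtain ⟨hia, hik', hil', hak, hal, hkl'⟩ := hdist i a k l hxa
    -- helper: for m ∉ A with m ≠ k, m ≠ l : X i a k m ∧ X i a l m
    have haux : ∀ m, m ∉ A → m ≠ k → m ≠ l → X i a k m ∧ X i a l m := by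
      intro m hmA hmk hml
      have hmi : m ≠ i := fun hm => hmA (Or.inl hm)
      have hma : m ≠ a := fun hm => hmA (hm ▸ haA)
      have hnx : ¬ X i m k l := fun hx => hmA (Or.inr hx)
      have h1 : X i a k m := by
        rcases hX3 i a k l m hxa hmi hma hmk hml with h' | h'
        · exact h'
        · exact absurd h' hnx
      have h2 : X i a l m := by
        rcases hX3 i a l k m (hsw2 _ _ _ _ hxa) hmi hma hml hmk with h' | h'
        · exact h'
        · exact absurd (hsw2 _ _ _ _ h') hnx
      exact ⟨h1, h2⟩
    by_cases hck : c = k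
    · subst hck
      by_cases hdl : d = l
      · subst hdl; exact hxa
      · exact (haux d hdA (Ne.symm hcd) hdl).1
    · by_cases hcl : c = l
      · subst hcl
        by_cases hdk : d = k
        · subst hdk; exact hsw2 _ _ _ _ hxa
        · exact (haux d hdA hdk (Ne.symm hcd)).2
      · have h1 := (haux c hcA hck hcl).1
        by_cases hdk : d = k
        · subst hdk; exact hsw2 _ _ _ _ h1
        · by_cases hdl : d = l
          · subst hdl; exact hsw2 _ _ _ _ (haux c hcA hck hcl).2
          · have h2 := (haux d hdA hdk hdl).1
            exact hX2 i a k c d h1 h2 hcd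
  refine ⟨A, hiA, hjA, hkA, hlA, ?_, ?_, ?_⟩
  · calc 2 = ({i, j} : Set α).ncard := (Set.ncard_pair hij).symm
      _ ≤ A.ncard := Set.ncard_le_ncard (by
          intro x hx
          rcases hx with rfl | hx
          · exact hiA
          · simp only [Set.mem_singleton_iff] at hx; subst hx; exact hjA) A.toFinite
  · calc 2 = ({k, l} : Set α).ncard := (Set.ncard_pair hkl).symm
      _ ≤ Aᶜ.ncard := Set.ncard_le_ncard (by
          intro x hx
          rcases hx with rfl | hx
          · exact hkA
          · simp only [Set.mem_singleton_iff] at hx; subst hx; exact hlA) Aᶜ.toFinite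
  · intro a b c d haA hbA hab hcA hdA hcd
    by_cases hai : a = i
    · subst hai
      exact hB b hbA (Ne.symm hab) c d hcA hdA hcd
    · by_cases hbi : b = i
      · subst hbi
        exact hsw1 _ _ _ _ (hB a haA hai c d hcA hdA hcd)
      · have h1 := hsw3 _ _ _ _ (hB a haA hai c d hcA hdA hcd)
        have h2 := hsw3 _ _ _ _ (hB b hbA hbi c d hcA hdA hcd)
        exact hsw3 _ _ _ _ (hX2 c d i a b h1 h2 hab)
end

section
/- Let X be a phylogenetic crossing relation on N, and let C_X be the set of all cuts of N compatible with X. Then C_X is a phylogenetic set of cuts: for any two cuts (A1|B1),(A2|B2) ∈ C_X, at least one of A1∩A2, A1∩B2, B1∩A2, B1∩B2 is empty. -/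
open Set

/-- The set of cuts (represented by their clusters) compatible with `X`. -/
def CX {α : Type*} (X : α → α → α → α → Prop) : Set (Set α) :=
  {A : Set α | 2 ≤ A.ncard ∧ 2 ≤ Aᶜ.ncard ∧ Compatible X A}

/-- for a phylogenetic crossing relation `X`, the set `C_X` of cuts
compatible with `X` is a phylogenetic set of cuts. -/
theorem stmt14 {α : Type*} [Fintype α] (hcard : 3 ≤ Fintype.card α)
    (X : α → α → α → α → Prop) (hX : IsPhyloX X) : IsCutSet (CX X) := by
  obtain ⟨⟨_, _, _, hswap⟩, hX1, _, _⟩ := hX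
  constructor
  · rintro A ⟨h1, h2, hcomp⟩
    refine ⟨h1, h2, h2, by rwa [compl_compl], ?_⟩
    intro a b c d ha hb hab hc hd hcd
    simp only [mem_compl_iff, not_not] at ha hb hc hd
    exact hswap _ _ _ _ (hcomp c d a b hc hd hcd ha hb hab)
  · rintro A ⟨_, _, hA⟩ B ⟨_, _, hB⟩
    by_contra h
    push_neg at h
    obtain ⟨h1, h2, h3, h4⟩ := h
    obtain ⟨a, haA, haB⟩ := h1
    obtain ⟨b, hbA, hbB⟩ := h2
    obtain ⟨c, hcA, hcB⟩ := h3
    obtain ⟨d, hdA, hdB⟩ := h4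
    simp only [mem_compl_iff] at hbB hcA hdA hdB
    have hab : a ≠ b := fun h => hbB (h ▸ haB)
    have hcd : c ≠ d := fun h => hdB (h ▸ hcB)
    have hac : a ≠ c := fun h => hcA (h ▸ haA)
    have hbd : b ≠ d := fun h => hdA (h ▸ hbA)
    exact hX1 a b c d (hA a b c d haA hbA hab hcA hdA hcd)
      (hB a c b d haB hcB hac hbB hdB hbd)
end

section
/- The maps C ↦ X_C (sending a phylogenetic set of cuts to the crossing relation {(i,j|k,l) : ∃(A|B)∈C, i,j∈A, k,l∈B}) and X ↦ C_X (sending a phylogenetic crossing relation to the set of cuts compatible with X) are mutually inverse bijections between phylogenetic sets of cuts and phylogenetic crossing relations on N. -/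
/-!
For `a ∈ A` and `c ∉ A`, the members of a phylogenetic set of cuts `C` that contain `a` but
not `c` form a chain under inclusion, so a finite set covered by such members lies inside a
single one. If `A` is compatible with `X_C`, any `x ∈ A` and `y ∉ A` are separated by such a
member. Covering `A` once by members avoiding a given `y`, and once (through the complement of
`A`) by members contained in `A`, produces a member of `C` squeezed between `A` and `A`.

Conversely, for `(i,j|k,l) ∈ X` the cluster `{i} ∪ {m | (i,m|k,l) ∈ X}` is compatible with `X`:
(X3) spreads `(i,p|k,l)` to `(i,p|k,e)` for every `e` outside the cluster, and (X2) turns such a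
star of quartets through `k` into all quartets `(i,p|c,d)`.
-/

open Set

section

variable {α : Type*}

theorem Set.exists_mem_ne_and_eq_or_eq {s : Set α} (hs : 2 ≤ s.ncard) {a x : α} (hx : x ∈ s) :
    ∃ b ∈ s, a ≠ b ∧ (x = a ∨ x = b) := by
  by_cases hxa : x = a
  · obtain ⟨b, hb, hba⟩ := exists_ne_of_one_lt_ncard hs a
    exact ⟨b, hb, hba.symm, .inl hxa⟩
  · exact ⟨x, hx, Ne.symm hxa, .inr rfl⟩

theorem IsCrossRel.compatible_compl {X : α → α → α → α → Prop} (hX : IsCrossRel X)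
    {A : Set α} (hA : Compatible X A) : Compatible X Aᶜ :=
  fun a b c d ha hb hab hc hd hcd =>
    hX.2.2.2 _ _ _ _ (hA c d a b (not_not.1 hc) (not_not.1 hd) hcd ha hb hab)

theorem IsCrossRel.compl_mem_CX {X : α → α → α → α → Prop} (hX : IsCrossRel X) {A : Set α}
    (hA : A ∈ CX X) : Aᶜ ∈ CX X :=
  ⟨hA.2.1, (compl_compl A).symm ▸ hA.1, hX.compatible_compl hA.2.2⟩

section CutSet

variable {C : Set (Set α)}

theorem IsCutSet.compl_mem (hC : IsCutSet C) {A : Set α} (hA : A ∈ C) : Aᶜ ∈ C :=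
  (hC.1 A hA).2.2

theorem IsCutSet.subset_or_subset (hC : IsCutSet C) {B B' : Set α} (hB : B ∈ C) (hB' : B' ∈ C)
    {a c : α} (haB : a ∈ B) (haB' : a ∈ B') (hcB : c ∉ B) (hcB' : c ∉ B') :
    B ⊆ B' ∨ B' ⊆ B := by
  rcases hC.2 B hB B' hB' with h | h | h | h
  · exact (h.subset (mem_inter haB haB')).elim
  · exact .inl fun x hx => by_contra fun hx' => h.subset ⟨hx, hx'⟩
  · exact .inr fun x hx => by_contra fun hx' => h.subset ⟨hx', hx⟩
  · exact (h.subset (mem_inter hcB hcB')).elim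

theorem IsCutSet.isChain (hC : IsCutSet C) (a c : α) :
    IsChain (· ⊆ ·) {B | B ∈ C ∧ a ∈ B ∧ c ∉ B} :=
  fun _ hB _ hB' _ => hC.subset_or_subset hB.1 hB'.1 hB.2.1 hB'.2.1 hB.2.2 hB'.2.2

theorem IsCutSet.exists_mem_superset (hC : IsCutSet C) {P : Set α → Prop} {a c : α}
    {S : Set α} (hS : S.Finite) (hne : S.Nonempty)
    (hcov : ∀ x ∈ S, ∃ B ∈ C, a ∈ B ∧ c ∉ B ∧ P B ∧ x ∈ B) :
    ∃ B ∈ C, a ∈ B ∧ c ∉ B ∧ P B ∧ S ⊆ B := by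
  have hchain : IsChain (· ⊆ ·) {B | B ∈ C ∧ a ∈ B ∧ c ∉ B ∧ P B} :=
    (hC.isChain a c).mono fun _ hB => And.imp_right (And.imp_right And.left) hB
  have hcov' : S ⊆ ⋃₀ {B | B ∈ C ∧ a ∈ B ∧ c ∉ B ∧ P B} := fun x hx => by
    obtain ⟨B, hB, haB, hcB, hPB, hxB⟩ := hcov x hx
    exact ⟨B, ⟨hB, haB, hcB, hPB⟩, hxB⟩
  obtain ⟨x, hx⟩ := hne
  obtain ⟨B, hB, -⟩ := hcov' hx
  obtain ⟨M, ⟨hM, haM, hcM, hPM⟩, hSM⟩ :=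
    hchain.directedOn.exists_mem_subset_of_finite_of_subset_sUnion ⟨B, hB⟩ hS hcov'
  exact ⟨M, hM, haM, hcM, hPM, hSM⟩

theorem XC_of_mem {A : Set α} (hA : A ∈ C) {i j k l : α} (hi : i ∈ A) (hj : j ∈ A) (hk : k ∉ A)
    (hl : l ∉ A) (hij : i ≠ j) (hkl : k ≠ l) : XC C i j k l :=
  ⟨hij, ne_of_mem_of_not_mem hi hk, ne_of_mem_of_not_mem hi hl, ne_of_mem_of_not_mem hj hk,
    ne_of_mem_of_not_mem hj hl, hkl, A, hA, hi, hj, hk, hl⟩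

theorem IsCutSet.isPhyloX_XC (hC : IsCutSet C) : IsPhyloX (XC C) := by
  refine ⟨⟨?_, ?_, ?_, ?_⟩, ?_, ?_, ?_⟩
  · rintro i j k l ⟨h₁, h₂, h₃, h₄, h₅, h₆, -⟩
    exact ⟨h₁, h₂, h₃, h₄, h₅, h₆⟩
  · rintro i j k l ⟨hij, -, -, -, -, hkl, A, hA, hi, hj, hk, hl⟩
    exact XC_of_mem hA hj hi hk hl hij.symm hkl
  · rintro i j k l ⟨hij, -, -, -, -, hkl, A, hA, hi, hj, hk, hl⟩
    exact XC_of_mem hA hi hj hl hk hij hkl.symm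
  · rintro i j k l ⟨hij, -, -, -, -, hkl, A, hA, hi, hj, hk, hl⟩
    exact XC_of_mem (hC.compl_mem hA) hk hl (not_not_intro hi) (not_not_intro hj) hkl hij
  · rintro i j k l ⟨-, -, -, -, -, -, A, hA, hiA, hjA, hkA, hlA⟩
      ⟨-, -, -, -, -, -, B, hB, hiB, hkB, hjB, hlB⟩
    rcases hC.2 A hA B hB with h | h | h | h
    · exact h.subset ⟨hiA, hiB⟩
    · exact h.subset ⟨hjA, hjB⟩
    · exact h.subset ⟨hkA, hkB⟩
    · exact h.subset ⟨hlA, hlB⟩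
  · rintro i j k l m ⟨hij, -, -, -, -, -, A, hA, hiA, hjA, hkA, hlA⟩
      ⟨-, -, -, -, -, -, B, hB, hiB, hjB, hkB, hmB⟩ hlm
    rcases hC.subset_or_subset hA hB hiA hiB hkA hkB with hAB | hBA
    · exact XC_of_mem hA hiA hjA hlA (fun hm => hmB (hAB hm)) hij hlm
    · exact XC_of_mem hB hiB hjB (fun hl => hlA (hBA hl)) hmB hij hlm
  · rintro i j k l m ⟨hij, -, -, -, -, hkl, A, hA, hiA, hjA, hkA, hlA⟩ hmi hmj hmk -
    by_cases hm : m ∈ A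
    · exact .inr (XC_of_mem hA hiA hm hkA hlA (Ne.symm hmi) hkl)
    · exact .inl (XC_of_mem hA hiA hjA hkA hm hij (Ne.symm hmk))

theorem compatible_XC_of_mem {A : Set α} (hA : A ∈ C) : Compatible (XC C) A :=
  fun _ _ _ _ ha hb hab hc hd hcd => XC_of_mem hA ha hb hc hd hab hcd

theorem exists_mem_of_compatible_XC {A : Set α} (hA : A ∈ CX (XC C)) {a x c y : α}
    (ha : a ∈ A) (hx : x ∈ A) (hc : c ∉ A) (hy : y ∉ A) :
    ∃ B ∈ C, a ∈ B ∧ c ∉ B ∧ y ∉ B ∧ x ∈ B := by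
  obtain ⟨h2A, h2Ac, hcomp⟩ := hA
  obtain ⟨b, hb, hab, hxab⟩ := exists_mem_ne_and_eq_or_eq h2A (a := a) hx
  obtain ⟨d, hd, hcd, hycd⟩ := exists_mem_ne_and_eq_or_eq h2Ac (a := c) hy
  obtain ⟨-, -, -, -, -, -, B, hB, haB, hbB, hcB, hdB⟩ := hcomp a b c d ha hb hab hc hd hcd
  refine ⟨B, hB, haB, hcB, ?_, ?_⟩
  · rcases hycd with rfl | rfl <;> assumption
  · rcases hxab with rfl | rfl <;> assumption

theorem IsCutSet.exists_superset_of_mem_CX_XC (hC : IsCutSet C) {A : Set α}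
    (hA : A ∈ CX (XC C)) {a c y : α} (ha : a ∈ A) (hc : c ∉ A) (hy : y ∉ A) :
    ∃ M ∈ C, a ∈ M ∧ c ∉ M ∧ y ∉ M ∧ A ⊆ M :=
  hC.exists_mem_superset (P := (y ∉ ·)) (finite_of_ncard_pos (by linarith [hA.1])) ⟨a, ha⟩
    fun _ hx => exists_mem_of_compatible_XC hA ha hx hc hy

theorem IsCutSet.mem_of_mem_CX_XC (hC : IsCutSet C) {A : Set α} (hA : A ∈ CX (XC C)) :
    A ∈ C := by
  obtain ⟨a, ha⟩ := nonempty_of_ncard_ne_zero (by linarith [hA.1] : A.ncard ≠ 0)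
  obtain ⟨c, hc⟩ := nonempty_of_ncard_ne_zero (by linarith [hA.2.1] : Aᶜ.ncard ≠ 0)
  have hinner : ∀ x ∈ A, ∃ N ∈ C, a ∈ N ∧ c ∉ N ∧ N ⊆ A ∧ x ∈ N := by
    intro x hx
    obtain ⟨M, hM, hcM, haM, hxM, hAM⟩ := hC.exists_superset_of_mem_CX_XC
      (hC.isPhyloX_XC.1.compl_mem_CX hA) hc (not_not_intro ha) (not_not_intro hx)
    exact ⟨Mᶜ, hC.compl_mem hM, haM, not_not_intro hcM, compl_subset_comm.1 hAM, hxM⟩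
  obtain ⟨N, hN, -, -, hNA, hAN⟩ :=
    hC.exists_mem_superset (finite_of_ncard_pos (by linarith [hA.1])) ⟨a, ha⟩ hinner
  exact hNA.antisymm hAN ▸ hN

theorem IsCutSet.CX_XC (hC : IsCutSet C) : CX (XC C) = C :=
  Set.ext fun A => ⟨hC.mem_of_mem_CX_XC,
    fun hA => ⟨(hC.1 A hA).1, (hC.1 A hA).2.1, compatible_XC_of_mem hA⟩⟩

end CutSet

section CrossingRelation

variable {X : α → α → α → α → Prop}

theorem IsPhyloX.isCutSet_CX (hX : IsPhyloX X) : IsCutSet (CX X) := by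
  refine ⟨fun A hA => ⟨hA.1, hA.2.1, hX.1.compl_mem_CX hA⟩, fun A hA B hB => ?_⟩
  simp only [← not_nonempty_iff_eq_empty]
  by_contra! h
  obtain ⟨⟨i, hiA, hiB⟩, ⟨j, hjA, hjB⟩, ⟨k, hkA, hkB⟩, ⟨l, hlA, hlB⟩⟩ := h
  exact hX.2.1 i j k l
    (hA.2.2 i j k l hiA hjA (ne_of_mem_of_not_mem hiB hjB) hkA hlA (ne_of_mem_of_not_mem hkB hlB))
    (hB.2.2 i k j l hiB hkB (ne_of_mem_of_not_mem hiA hkA) hjB hlB (ne_of_mem_of_not_mem hjA hlA))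

theorem IsPhyloX.of_star (hX : IsPhyloX X) {D : Set α} {i p k : α} (hk : k ∈ D)
    (h : ∀ e ∈ D, e ≠ k → X i p k e) {c d : α} (hc : c ∈ D) (hd : d ∈ D) (hcd : c ≠ d) :
    X i p c d := by
  by_cases hck : c = k
  · subst hck
    exact h d hd hcd.symm
  by_cases hdk : d = k
  · subst hdk
    exact hX.1.2.2.1 _ _ _ _ (h c hc hck)
  exact hX.2.2.1 i p k c d (h c hc hck) (h d hd hdk) hcd

theorem IsPhyloX.exists_compatible (hX : IsPhyloX X) {i j k l : α} (h : X i j k l) :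
    ∃ A : Set α, i ∈ A ∧ j ∈ A ∧ k ∉ A ∧ l ∉ A ∧ Compatible X A := by
  have hdist := hX.1.1
  have hsymm := hX.1.2.2.2
  have hX3 := hX.2.2.2
  set A := insert i {m | X i m k l}
  have hkA : k ∉ A := by
    rintro (hki | hk)
    exacts [(hdist _ _ _ _ h).2.1 hki.symm, (hdist _ _ _ _ hk).2.2.2.1 rfl]
  have hlA : l ∉ A := by
    rintro (hli | hl)
    exacts [(hdist _ _ _ _ h).2.2.1 hli.symm, (hdist _ _ _ _ hl).2.2.2.2.1 rfl]
  have hright : ∀ p ∈ A, p ≠ i → ∀ c d, c ∉ A → d ∉ A → c ≠ d → X i p c d := by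
    intro p hp hpi c d hc hd hcd
    have hp' : X i p k l := hp.resolve_left hpi
    refine hX.of_star (D := Aᶜ) hkA (fun e he hek => ?_) hc hd hcd
    by_cases hel : e = l
    · exact hel ▸ hp'
    have hei : e ≠ i := fun hei => he (.inl hei)
    have hXe : ¬ X i e k l := fun hXe => he (.inr hXe)
    exact (hX3 i p k l e hp' hei (ne_of_mem_of_not_mem hp he).symm hek hel).resolve_right hXe
  refine ⟨A, mem_insert i _, .inr h, hkA, hlA, fun a b c d ha hb hab hc hd hcd => hsymm _ _ _ _ ?_⟩
  exact hX.of_star (D := A) (mem_insert i _)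
    (fun e he hei => hsymm _ _ _ _ (hright e he hei c d hc hd hcd)) ha hb hab

theorem IsPhyloX.XC_CX [Finite α] (hX : IsPhyloX X) : XC (CX X) = X := by
  funext i j k l
  refine propext ⟨?_, fun h => ?_⟩
  · rintro ⟨hij, -, -, -, -, hkl, A, hA, hi, hj, hk, hl⟩
    exact hA.2.2 i j k l hi hj hij hk hl hkl
  obtain ⟨hij, -, -, -, -, hkl⟩ := hX.1.1 _ _ _ _ h
  obtain ⟨A, hi, hj, hk, hl, hA⟩ := hX.exists_compatible h
  have hAX : A ∈ CX X :=
    ⟨(one_lt_ncard_iff).2 ⟨i, j, hi, hj, hij⟩, (one_lt_ncard_iff).2 ⟨k, l, hk, hl, hkl⟩, hA⟩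
  exact XC_of_mem hAX hi hj hk hl hij hkl

end CrossingRelation

end

theorem stmt15_general {α : Type*} [Fintype α] :
    (∀ C : Set (Set α), IsCutSet C → IsPhyloX (XC C) ∧ CX (XC C) = C) ∧
    (∀ X : α → α → α → α → Prop, IsPhyloX X →
      IsCutSet (CX X) ∧ ∀ i j k l : α, XC (CX X) i j k l ↔ X i j k l) :=
  ⟨fun _ hC => ⟨hC.isPhyloX_XC, hC.CX_XC⟩,
    fun _ hX => ⟨hX.isCutSet_CX, fun i j k l => by rw [hX.XC_CX]⟩⟩

/-- the maps `C ↦ X_C` and `X ↦ C_X` are mutually inverse bijections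
between phylogenetic sets of cuts and phylogenetic crossing relations on `α`. -/
theorem stmt15 {α : Type*} [Fintype α] (hcard : 3 ≤ Fintype.card α) :
    (∀ C : Set (Set α), IsCutSet C → IsPhyloX (XC C) ∧ CX (XC C) = C) ∧
    (∀ X : α → α → α → α → Prop, IsPhyloX X →
      IsCutSet (CX X) ∧ ∀ i j k l : α, XC (CX X) i j k l ↔ X i j k l) :=
  stmt15_general
end

section
/- Let P be a collection of partitions of N such that every partition in P has at least 3 parts and every 3-element subset of N is separated by a unique partition in P. Let p1, p2 ∈ P be distinct. Then there is a unique pair of parts A1 ∈ p1 and A2 ∈ p2 with A1 ∪ A2 = N; moreover, every part B1 ∈ p1 with B1 ≠ A1 satisfies B1 ⊆ A2, every part B2 ∈ p2 with B2 ≠ A2 satisfies B2 ⊆ A1, and such B1, B2 are disjoint. -/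
open Set

/-- A partition `p` of `α` separates the triple `{a,b,c}` if `a`, `b`, `c` lie in three
pairwise distinct parts of `p`. -/
def Separates {α : Type*} (p : Set (Set α)) (a b c : α) : Prop :=
  ∃ A ∈ p, ∃ B ∈ p, ∃ D ∈ p, a ∈ A ∧ b ∈ B ∧ c ∈ D ∧ A ≠ B ∧ A ≠ D ∧ B ≠ D

lemma exists_third {β : Type*} {s : Set β} (h : 3 ≤ s.ncard) (a b : β) :
    ∃ c ∈ s, c ≠ a ∧ c ≠ b := by
  by_contra hc
  push_neg at hc
  have hsub : s ⊆ {a, b} := by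
    intro c hcs
    rcases eq_or_ne c a with h'|h'
    · simp [h']
    · simp [hc c hcs h']
  have h2 : s.ncard ≤ ({a, b} : Set β).ncard :=
    Set.ncard_le_ncard hsub (Set.toFinite _)
  have h3 : ({a, b} : Set β).ncard ≤ 2 := by
    have := Set.ncard_insert_le a ({b} : Set β)
    simpa using this
  omega

/-- if every partition of a collection `P` has at least 3 parts and every
triple is separated by a unique partition of `P`, then for distinct `p₁, p₂ ∈ P` there
is a unique pair of parts `A₁ ∈ p₁`, `A₂ ∈ p₂` with `A₁ ∪ A₂ = univ`; moreover any
other parts `B₁ ∈ p₁`, `B₂ ∈ p₂` satisfy `B₁ ⊆ A₂`, `B₂ ⊆ A₁` and `B₁ ∩ B₂ = ∅`. -/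
theorem stmt16 {α : Type*} [Fintype α] (hcard : 3 ≤ Fintype.card α)
    (P : Set (Set (Set α)))
    (hP : ∀ p ∈ P, Setoid.IsPartition p ∧ 3 ≤ p.ncard)
    (hsep : ∀ a b c : α, a ≠ b → a ≠ c → b ≠ c → ∃! p, p ∈ P ∧ Separates p a b c)
    (p₁ p₂ : Set (Set α)) (hp₁ : p₁ ∈ P) (hp₂ : p₂ ∈ P) (hne : p₁ ≠ p₂) :
    (∃! q : Set α × Set α, q.1 ∈ p₁ ∧ q.2 ∈ p₂ ∧ q.1 ∪ q.2 = Set.univ) ∧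
    ∀ A₁ ∈ p₁, ∀ A₂ ∈ p₂, A₁ ∪ A₂ = Set.univ →
      ∀ B₁ ∈ p₁, B₁ ≠ A₁ → ∀ B₂ ∈ p₂, B₂ ≠ A₂ →
        B₁ ⊆ A₂ ∧ B₂ ⊆ A₁ ∧ B₁ ∩ B₂ = ∅ := by
  classical
  obtain ⟨h₁, hc₁⟩ := hP p₁ hp₁
  obtain ⟨h₂, hc₂⟩ := hP p₂ hp₂
  have hRdef : ∀ x : α, ∃ B, (B ∈ p₁) ∧ (x ∈ B) ∧ ∀ C, C ∈ p₁ → x ∈ C → C = B := by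
    intro x
    obtain ⟨B, ⟨hBp, hBx⟩, hu⟩ := h₁.2 x
    exact ⟨B, hBp, hBx, fun C hC hxC => hu C ⟨hC, hxC⟩⟩
  choose R hRp hRx hRu using hRdef
  have hQdef : ∀ x : α, ∃ B, (B ∈ p₂) ∧ (x ∈ B) ∧ ∀ C, C ∈ p₂ → x ∈ C → C = B := by
    intro x
    obtain ⟨B, ⟨hBp, hBx⟩, hu⟩ := h₂.2 x
    exact ⟨B, hBp, hBx, fun C hC hxC => hu C ⟨hC, hxC⟩⟩
  choose Q hQp hQx hQu using hQdef
  -- every part is nonempty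
  have hne₁ : ∀ B ∈ p₁, ∃ x, x ∈ B := by
    intro B hB
    rcases B.eq_empty_or_nonempty with h|h
    · exact absurd (h ▸ hB) h₁.1
    · exact h
  have hne₂ : ∀ B ∈ p₂, ∃ x, x ∈ B := by
    intro B hB
    rcases B.eq_empty_or_nonempty with h|h
    · exact absurd (h ▸ hB) h₂.1
    · exact h
  -- no triple is separated by both p₁ and p₂
  have noRR : ∀ x y z : α, R x ≠ R y → R x ≠ R z → R y ≠ R z →
      Q x ≠ Q y → Q x ≠ Q z → Q y ≠ Q z → False := by
    intro x y z h1 h2 h3 g1 g2 g3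
    have hxy : x ≠ y := fun h => h1 (by rw [h])
    have hxz : x ≠ z := fun h => h2 (by rw [h])
    have hyz : y ≠ z := fun h => h3 (by rw [h])
    have s1 : Separates p₁ x y z :=
      ⟨R x, hRp x, R y, hRp y, R z, hRp z, hRx x, hRx y, hRx z, h1, h2, h3⟩
    have s2 : Separates p₂ x y z :=
      ⟨Q x, hQp x, Q y, hQp y, Q z, hQp z, hQx x, hQx y, hQx z, g1, g2, g3⟩
    obtain ⟨p, -, hu⟩ := hsep x y z hxy hxz hyz
    exact hne ((hu p₁ ⟨hp₁, s1⟩).trans (hu p₂ ⟨hp₂, s2⟩).symm)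
  have con : ∀ x y z : α, R x ≠ R y → R x ≠ R z → R y ≠ R z →
      Q x = Q y ∨ Q x = Q z ∨ Q y = Q z := by
    intro x y z h1 h2 h3
    by_contra hc
    push_neg at hc
    exact noRR x y z h1 h2 h3 hc.1 hc.2.1 hc.2.2
  -- L1 : at most one part of p₁ meets two different parts of p₂
  have L1 : ∀ X X' : Set α, X ∈ p₁ → X' ∈ p₁ → X ≠ X' →
      (∃ a ∈ X, ∃ b ∈ X, Q a ≠ Q b) → (∃ a ∈ X', ∃ b ∈ X', Q a ≠ Q b) → False := by
    intro X X' hX hX' hXX' hS hS'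
    obtain ⟨x₁, hx₁, x₂, hx₂, hq⟩ := hS
    obtain ⟨y₁, hy₁, y₂, hy₂, hr⟩ := hS'
    have e1 : R x₁ = X := (hRu x₁ X hX hx₁).symm
    have e2 : R x₂ = X := (hRu x₂ X hX hx₂).symm
    have f1 : R y₁ = X' := (hRu y₁ X' hX' hy₁).symm
    have f2 : R y₂ = X' := (hRu y₂ X' hX' hy₂).symm
    obtain ⟨Z, hZ, hZ1, hZ2⟩ := exists_third hc₂ (Q x₁) (Q x₂)
    obtain ⟨t, ht⟩ := hne₂ Z hZ
    have hQt : Q t = Z := (hQu t Z hZ ht).symm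
    have hs1 : Q t ≠ Q x₁ := by rw [hQt]; exact hZ1
    have hs2 : Q t ≠ Q x₂ := by rw [hQt]; exact hZ2
    by_cases htX : R t = X
    · -- t is a third point of X with a fresh Q-value
      obtain ⟨W, hW, hW1, hW2⟩ := exists_third hc₁ X X'
      obtain ⟨z, hz⟩ := hne₁ W hW
      have ez : R z = W := (hRu z W hW hz).symm
      have hz1 : R z ≠ X := by rw [ez]; exact hW1
      have hz2 : R z ≠ X' := by rw [ez]; exact hW2
      have fin : ∀ y, R y = X' → Q y ≠ Q z → False := by
        intro y hy hyz
        have key : ∀ a, R a = X → Q a = Q y ∨ Q a = Q z := by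
          intro a ha
          rcases con a y z (by rw [ha, hy]; exact hXX') (by rw [ha]; exact Ne.symm hz1)
            (by rw [hy]; exact Ne.symm hz2) with c|c|c
          · exact Or.inl c
          · exact Or.inr c
          · exact absurd c hyz
        rcases key x₁ e1 with k1|k1 <;> rcases key x₂ e2 with k2|k2 <;>
            rcases key t htX with k3|k3 <;>
          first
          | exact hq (k1.trans k2.symm)
          | exact hs1 (k3.trans k1.symm)
          | exact hs2 (k3.trans k2.symm)
      by_cases hyz : Q y₁ = Q z
      · exact fin y₂ f2 (fun h => hr (hyz.trans h.symm))
      · exact fin y₁ f1 hyz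
    by_cases htX' : R t = X'
    · -- t is a third point of X'
      obtain ⟨W, hW, hW1, hW2⟩ := exists_third hc₁ X X'
      obtain ⟨z, hz⟩ := hne₁ W hW
      have ez : R z = W := (hRu z W hW hz).symm
      have hz1 : R z ≠ X := by rw [ez]; exact hW1
      have hz2 : R z ≠ X' := by rw [ez]; exact hW2
      have hQz : Q z = Q t := by
        rcases con x₁ t z (by rw [e1, htX']; exact hXX') (by rw [e1]; exact Ne.symm hz1)
          (by rw [htX']; exact Ne.symm hz2) with c|c|c
        · exact absurd c.symm hs1
        · rcases con x₂ t z (by rw [e2, htX']; exact hXX') (by rw [e2]; exact Ne.symm hz1)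
            (by rw [htX']; exact Ne.symm hz2) with d|d|d
          · exact absurd d.symm hs2
          · exact absurd (c.trans d.symm) hq
          · exact d.symm
        · exact c.symm
      have hj : ∀ y, R y = X' → Q y = Q t := by
        intro y hy
        rcases con x₁ y z (by rw [e1, hy]; exact hXX') (by rw [e1]; exact Ne.symm hz1)
          (by rw [hy]; exact Ne.symm hz2) with c|c|c
        · rcases con x₂ y z (by rw [e2, hy]; exact hXX') (by rw [e2]; exact Ne.symm hz1)
            (by rw [hy]; exact Ne.symm hz2) with d|d|d
          · exact absurd (c.trans d.symm) hq
          · exact absurd (d.trans hQz) (Ne.symm hs2)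
          · exact d.trans hQz
        · exact absurd (c.trans hQz) (Ne.symm hs1)
        · exact c.trans hQz
      exact hr ((hj y₁ f1).trans ((hj y₂ f2).symm))
    · -- t lies in a third part of p₁
      have hj : ∀ y, R y = X' → Q y = Q t := by
        intro y hy
        rcases con x₁ y t (by rw [e1, hy]; exact hXX') (by rw [e1]; exact Ne.symm htX)
          (by rw [hy]; exact Ne.symm htX') with c|c|c
        · rcases con x₂ y t (by rw [e2, hy]; exact hXX') (by rw [e2]; exact Ne.symm htX)
            (by rw [hy]; exact Ne.symm htX') with d|d|d
          · exact absurd (c.trans d.symm) hq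
          · exact absurd d.symm hs2
          · exact d
        · exact absurd c.symm hs1
        · exact c
      exact hr ((hj y₁ f1).trans ((hj y₂ f2).symm))
  -- L2 : two distinct unsplit parts of p₁ are contained in the same part of p₂
  have L2 : ∀ X X' : Set α, X ∈ p₁ → X' ∈ p₁ → X ≠ X' →
      (∀ a ∈ X, ∀ b ∈ X, Q a = Q b) → (∀ a ∈ X', ∀ b ∈ X', Q a = Q b) →
      ∀ x ∈ X, ∀ x' ∈ X', Q x = Q x' := by
    intro X X' hX hX' hXX' hu hu' x hx x' hx'
    by_contra hQne
    obtain ⟨Z, hZ, hZ1, hZ2⟩ := exists_third hc₂ (Q x) (Q x')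
    obtain ⟨t, ht⟩ := hne₂ Z hZ
    have hQt : Q t = Z := (hQu t Z hZ ht).symm
    have ex : R x = X := (hRu x X hX hx).symm
    have ex' : R x' = X' := (hRu x' X' hX' hx').symm
    have h1 : R t ≠ X := by
      intro h
      exact hZ1 (hQt.symm.trans (hu t (h ▸ hRx t) x hx))
    have h2 : R t ≠ X' := by
      intro h
      exact hZ2 (hQt.symm.trans (hu' t (h ▸ hRx t) x' hx'))
    exact noRR x x' t (by rw [ex, ex']; exact hXX') (by rw [ex]; exact Ne.symm h1)
      (by rw [ex']; exact Ne.symm h2) hQne (by rw [hQt]; exact Ne.symm hZ1)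
      (by rw [hQt]; exact Ne.symm hZ2)
  -- existence of a covering pair
  have cover : ∃ A₁ ∈ p₁, ∃ A₂ ∈ p₂, A₁ ∪ A₂ = univ := by
    by_cases hsp : ∃ A ∈ p₁, ∃ a ∈ A, ∃ b ∈ A, Q a ≠ Q b
    · obtain ⟨A, hA, hAs⟩ := hsp
      obtain ⟨X₀, hX₀, hX₀1, -⟩ := exists_third hc₁ A A
      obtain ⟨x₀, hx₀⟩ := hne₁ X₀ hX₀
      refine ⟨A, hA, Q x₀, hQp x₀, ?_⟩
      apply eq_univ_of_forall
      intro z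
      by_cases hz : z ∈ A
      · exact mem_union_left _ hz
      · refine mem_union_right _ ?_
        have hz1 : R z ≠ A := fun h => hz (h ▸ hRx z)
        have hzu : ∀ a ∈ R z, ∀ b ∈ R z, Q a = Q b := by
          by_contra hcon
          push_neg at hcon
          obtain ⟨a, ha, b, hb, hab⟩ := hcon
          exact L1 (R z) A (hRp z) hA hz1 ⟨a, ha, b, hb, hab⟩ hAs
        have hX₀u : ∀ a ∈ X₀, ∀ b ∈ X₀, Q a = Q b := by
          by_contra hcon
          push_neg at hcon
          obtain ⟨a, ha, b, hb, hab⟩ := hcon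
          exact L1 X₀ A hX₀ hA hX₀1 ⟨a, ha, b, hb, hab⟩ hAs
        have hQzx : Q z = Q x₀ := by
          by_cases hzx : R z = X₀
          · exact hzu z (hRx z) x₀ (show x₀ ∈ R z by rw [hzx]; exact hx₀)
          · exact L2 (R z) X₀ (hRp z) hX₀ hzx hzu hX₀u z (hRx z) x₀ hx₀
        exact hQzx ▸ hQx z
    · push_neg at hsp
      exfalso
      have hx0 : Nonempty α := by
        have : 0 < Fintype.card α := by omega
        exact Fintype.card_pos_iff.mp this
      obtain ⟨x₀⟩ := hx0
      have hall : ∀ z : α, Q z = Q x₀ := by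
        intro z
        by_cases h : R z = R x₀
        · exact hsp (R z) (hRp z) z (hRx z) x₀ (show x₀ ∈ R z by rw [h]; exact hRx x₀)
        · exact L2 (R z) (R x₀) (hRp z) (hRp x₀) h (hsp (R z) (hRp z))
            (hsp (R x₀) (hRp x₀)) z (hRx z) x₀ (hRx x₀)
      obtain ⟨Z, hZ, hZ1, -⟩ := exists_third hc₂ (Q x₀) (Q x₀)
      obtain ⟨t, ht⟩ := hne₂ Z hZ
      exact hZ1 ((hQu t Z hZ ht).trans (hall t))
  -- basic consequences of being a covering pair
  have sub1 : ∀ A₁, A₁ ∈ p₁ → ∀ A₂, A₂ ∈ p₂ → A₁ ∪ A₂ = univ →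
      ∀ B₁, B₁ ∈ p₁ → B₁ ≠ A₁ → B₁ ⊆ A₂ := by
    intro A₁ hA₁ A₂ hA₂ hun B₁ hB₁ hBne x hx
    have hxu : x ∈ A₁ ∪ A₂ := by rw [hun]; trivial
    rcases hxu with h|h
    · exact absurd ((hRu x B₁ hB₁ hx).trans (hRu x A₁ hA₁ h).symm) hBne
    · exact h
  have sub2 : ∀ A₁, A₁ ∈ p₁ → ∀ A₂, A₂ ∈ p₂ → A₁ ∪ A₂ = univ →
      ∀ B₂, B₂ ∈ p₂ → B₂ ≠ A₂ → B₂ ⊆ A₁ := by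
    intro A₁ hA₁ A₂ hA₂ hun B₂ hB₂ hBne x hx
    have hxu : x ∈ A₁ ∪ A₂ := by rw [hun]; trivial
    rcases hxu with h|h
    · exact h
    · exact absurd ((hQu x B₂ hB₂ hx).trans (hQu x A₂ hA₂ h).symm) hBne
  have notuniv₁ : ∀ B ∈ p₁, B ≠ univ := by
    intro B hB h
    obtain ⟨W, hW, hW1, -⟩ := exists_third hc₁ B B
    obtain ⟨w, hw⟩ := hne₁ W hW
    exact hW1 ((hRu w W hW hw).trans (hRu w B hB (by rw [h]; trivial)).symm)
  have notuniv₂ : ∀ B ∈ p₂, B ≠ univ := by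
    intro B hB h
    obtain ⟨W, hW, hW1, -⟩ := exists_third hc₂ B B
    obtain ⟨w, hw⟩ := hne₂ W hW
    exact hW1 ((hQu w W hW hw).trans (hQu w B hB (by rw [h]; trivial)).symm)
  have more : ∀ A₁ ∈ p₁, ∀ A₂ ∈ p₂, A₁ ∪ A₂ = Set.univ →
      ∀ B₁ ∈ p₁, B₁ ≠ A₁ → ∀ B₂ ∈ p₂, B₂ ≠ A₂ →
        B₁ ⊆ A₂ ∧ B₂ ⊆ A₁ ∧ B₁ ∩ B₂ = ∅ := by
    intro A₁ hA₁ A₂ hA₂ hun B₁ hB₁ h1 B₂ hB₂ h2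
    have hs1 := sub1 A₁ hA₁ A₂ hA₂ hun B₁ hB₁ h1
    have hs2 := sub2 A₁ hA₁ A₂ hA₂ hun B₂ hB₂ h2
    refine ⟨hs1, hs2, ?_⟩
    ext x
    simp only [mem_inter_iff, mem_empty_iff_false, iff_false, not_and]
    intro hx1 hx2
    exact h2 ((hQu x B₂ hB₂ hx2).trans (hQu x A₂ hA₂ (hs1 hx1)).symm)
  obtain ⟨A₁, hA₁, A₂, hA₂, hun⟩ := cover
  refine ⟨⟨(A₁, A₂), ⟨hA₁, hA₂, hun⟩, ?_⟩, more⟩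
  rintro ⟨C₁, C₂⟩ ⟨hC₁, hC₂, hun'⟩
  have hC1 : C₁ = A₁ := by
    by_contra hc
    have k2 : A₁ ⊆ C₂ := sub1 C₁ hC₁ C₂ hC₂ hun' A₁ hA₁ (Ne.symm hc)
    by_cases h2 : C₂ = A₂
    · have : A₂ = univ := by
        apply eq_univ_of_univ_subset
        rw [← hun]
        exact union_subset (h2 ▸ k2) subset_rfl
      exact notuniv₂ A₂ hA₂ this
    · have k4 : A₂ ⊆ C₁ := sub2 C₁ hC₁ C₂ hC₂ hun' A₂ hA₂ (Ne.symm h2)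
      obtain ⟨W, hW, hW1, hW2⟩ := exists_third hc₁ A₁ C₁
      obtain ⟨w, hw⟩ := hne₁ W hW
      have hwu : w ∈ A₁ ∪ A₂ := by rw [hun]; trivial
      rcases hwu with h|h
      · exact hW1 ((hRu w W hW hw).trans (hRu w A₁ hA₁ h).symm)
      · exact hW2 ((hRu w W hW hw).trans (hRu w C₁ hC₁ (k4 h)).symm)
  have hC2 : C₂ = A₂ := by
    by_contra hc2
    have k3 : C₂ ⊆ A₁ := sub2 A₁ hA₁ A₂ hA₂ hun C₂ hC₂ hc2
    have : A₁ = univ := by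
      apply eq_univ_of_univ_subset
      rw [← hun']
      exact union_subset (by rw [hC1]) k3
    exact notuniv₁ A₁ hA₁ this
  simp only [Prod.mk.injEq]
  exact ⟨hC1, hC2⟩
end

section
/- Let P be a collection of partitions of N such that every partition in P has at least 3 parts and every 3-element subset of N is separated by a unique partition in P. Then P is phylogenetic: every singleton of N is a part of some partition in P, every subset of N is a part of at most one partition in P, and for every part A with |A| ≥ 2 the complement N\A is also a part of some partition in P. -/
open Set

namespace Stmt17Aux

variable {α : Type*}

/-- The block of `x` in a partition `p`. -/
noncomputable def blk {p : Set (Set α)} (hp : Setoid.IsPartition p) (x : α) : Set α :=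
  (hp.2 x).choose

lemma blk_mem {p : Set (Set α)} (hp : Setoid.IsPartition p) (x : α) : blk hp x ∈ p :=
  (hp.2 x).choose_spec.1.1

lemma mem_blk {p : Set (Set α)} (hp : Setoid.IsPartition p) (x : α) : x ∈ blk hp x :=
  (hp.2 x).choose_spec.1.2

lemma eq_blk {p : Set (Set α)} (hp : Setoid.IsPartition p) {B : Set α} {x : α}
    (hB : B ∈ p) (hx : x ∈ B) : B = blk hp x :=
  (hp.2 x).choose_spec.2 B ⟨hB, hx⟩

lemma sep_iff {p : Set (Set α)} (hp : Setoid.IsPartition p) {a b c : α} :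
    Separates p a b c ↔
      blk hp a ≠ blk hp b ∧ blk hp a ≠ blk hp c ∧ blk hp b ≠ blk hp c := by
  constructor
  · rintro ⟨A, hA, B, hB, D, hD, ha, hb, hc, h1, h2, h3⟩
    rw [eq_blk hp hA ha] at h1 h2
    rw [eq_blk hp hB hb] at h1 h3
    rw [eq_blk hp hD hc] at h2 h3
    exact ⟨h1, h2, h3⟩
  · rintro ⟨h1, h2, h3⟩
    exact ⟨_, blk_mem hp a, _, blk_mem hp b, _, blk_mem hp c,
      mem_blk hp a, mem_blk hp b, mem_blk hp c, h1, h2, h3⟩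

/-- There is a part of `p` different from two given parts. -/
lemma third_part {p : Set (Set α)} (h3 : 3 ≤ p.ncard) {A B : Set α}
    (hA : A ∈ p) (hB : B ∈ p) : ∃ E ∈ p, E ≠ A ∧ E ≠ B := by
  have hfin : p.Finite := by
    by_contra h
    rw [Set.Infinite.ncard h] at h3
    omega
  have hsub : {A, B} ⊆ p := by
    intro x hx
    rcases hx with rfl | rfl
    · exact hA
    · exact hB
  have hcard2 : ({A, B} : Set (Set α)).ncard ≤ 2 := by
    have := Set.ncard_insert_le A ({B} : Set (Set α))
    simp only [Set.ncard_singleton] at this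
    omega
  have hd : (p \ {A, B}).ncard = p.ncard - ({A, B} : Set (Set α)).ncard :=
    Set.ncard_diff hsub (Set.Finite.subset hfin hsub)
  have : (p \ {A, B}).ncard ≠ 0 := by omega
  obtain ⟨E, hE⟩ := Set.nonempty_of_ncard_ne_zero this
  refine ⟨E, hE.1, ?_, ?_⟩
  · intro h; exact hE.2 (by simp [h])
  · intro h; exact hE.2 (by simp [h])

lemma part_nonempty {p : Set (Set α)} (hp : Setoid.IsPartition p) {E : Set α}
    (hE : E ∈ p) : E.Nonempty := by
  rcases Set.eq_empty_or_nonempty E with rfl | h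
  · exact absurd hE hp.1
  · exact h

lemma unique_sep {P : Set (Set (Set α))}
    (hsep : ∀ a b c : α, a ≠ b → a ≠ c → b ≠ c → ∃! p, p ∈ P ∧ Separates p a b c)
    {x y z : α} {p q : Set (Set α)} (hxy : x ≠ y) (hxz : x ≠ z) (hyz : y ≠ z)
    (hp : p ∈ P) (hq : q ∈ P) (hps : Separates p x y z) (hqs : Separates q x y z) :
    p = q := by
  obtain ⟨r, _, hr⟩ := hsep x y z hxy hxz hyz
  rw [hr p ⟨hp, hps⟩, hr q ⟨hq, hqs⟩]

/-- Claim 1: if `a, a' ∈ A`, `A ∈ p`, `b ∉ A`, then the separator `q` of `(a, a', b)`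
has a part `Q` with `b ∈ Q`, `Aᶜ ⊆ Q`, and `a, a' ∉ Q`. -/
lemma claim1 {P : Set (Set (Set α))}
    (hP : ∀ p ∈ P, Setoid.IsPartition p ∧ 3 ≤ p.ncard)
    (hsep : ∀ a b c : α, a ≠ b → a ≠ c → b ≠ c → ∃! p, p ∈ P ∧ Separates p a b c)
    {p : Set (Set α)} {A : Set α} (hpP : p ∈ P) (hA : A ∈ p)
    {a a' b : α} (ha : a ∈ A) (ha' : a' ∈ A) (haa : a ≠ a') (hb : b ∉ A) :
    ∃ q ∈ P, Separates q a a' b ∧ ∃ Q ∈ q, b ∈ Q ∧ Aᶜ ⊆ Q ∧ a ∉ Q ∧ a' ∉ Q := by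
  obtain ⟨hp1, hp3⟩ := hP p hpP
  have hab : a ≠ b := fun h => hb (h ▸ ha)
  have ha'b : a' ≠ b := fun h => hb (h ▸ ha')
  obtain ⟨q, ⟨hqP, hqsep⟩, _⟩ := hsep a a' b haa hab ha'b
  obtain ⟨hq1, hq3⟩ := hP q hqP
  have hAa : A = blk hp1 a := eq_blk hp1 hA ha
  have hAa' : A = blk hp1 a' := eq_blk hp1 hA ha'
  have hqp : q ≠ p := by
    rintro rfl
    exact ((sep_iff hp1).1 hqsep).1 (hAa.symm.trans hAa')
  obtain ⟨hqaa', hqab, hqa'b⟩ := (sep_iff hq1).1 hqsep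
  have hAB : A ≠ blk hp1 b := fun h => hb (h.symm ▸ mem_blk hp1 b)
  obtain ⟨E, hEp, hEA, hEB⟩ := third_part hp3 hA (blk_mem hp1 b)
  obtain ⟨d, hd⟩ := part_nonempty hp1 hEp
  have hdE : E = blk hp1 d := eq_blk hp1 hEp hd
  have hdA : d ∉ A := fun h => hEA (hdE.trans (eq_blk hp1 hA h).symm)
  have key : ∀ y, y ∉ A → blk hp1 y ≠ blk hp1 b → blk hq1 y = blk hq1 b := by
    intro y hyA hyB
    by_contra hne
    have hay : a ≠ y := fun h => hyA (h ▸ ha)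
    have ha'y : a' ≠ y := fun h => hyA (h ▸ ha')
    have hby : b ≠ y := fun h => hyB (by rw [h])
    have hAy : A ≠ blk hp1 y := fun h => hyA (h.symm ▸ mem_blk hp1 y)
    have hpsep : Separates p a b y := (sep_iff hp1).2
      ⟨by rw [← hAa]; exact hAB, by rw [← hAa]; exact hAy, fun h => hyB h.symm⟩
    have hpsep' : Separates p a' b y := (sep_iff hp1).2
      ⟨by rw [← hAa']; exact hAB, by rw [← hAa']; exact hAy, fun h => hyB h.symm⟩
    have hqn : ¬ Separates q a b y := fun hs =>
      hqp (unique_sep hsep hab hay hby hqP hpP hs hpsep)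
    have hqn' : ¬ Separates q a' b y := fun hs =>
      hqp (unique_sep hsep ha'b ha'y hby hqP hpP hs hpsep')
    have e1 : blk hq1 a = blk hq1 y := by
      by_contra h2
      exact hqn ((sep_iff hq1).2 ⟨hqab, h2, fun e => hne e.symm⟩)
    have e2 : blk hq1 a' = blk hq1 y := by
      by_contra h2
      exact hqn' ((sep_iff hq1).2 ⟨hqa'b, h2, fun e => hne e.symm⟩)
    exact hqaa' (e1.trans e2.symm)
  have hdB : blk hp1 d ≠ blk hp1 b := by rw [← hdE]; exact hEB
  have hdb : blk hq1 d = blk hq1 b := key d hdA hdB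
  have key2 : ∀ y, y ∉ A → blk hq1 y = blk hq1 b := by
    intro y hyA
    by_cases hyB : blk hp1 y = blk hp1 b
    · by_contra hne
      have hyd : y ≠ d := fun h => hne (h ▸ hdb)
      have hay : a ≠ y := fun h => hyA (h ▸ ha)
      have ha'y : a' ≠ y := fun h => hyA (h ▸ ha')
      have had : a ≠ d := fun h => hdA (h ▸ ha)
      have ha'd : a' ≠ d := fun h => hdA (h ▸ ha')
      have hAy : A ≠ blk hp1 y := fun h => hyA (h.symm ▸ mem_blk hp1 y)
      have hpsep : Separates p a y d := (sep_iff hp1).2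
        ⟨by rw [← hAa]; exact hAy, by rw [← hAa, ← hdE]; exact fun h => hEA h.symm,
          by rw [hyB, ← hdE]; exact fun h => hEB h.symm⟩
      have hpsep' : Separates p a' y d := (sep_iff hp1).2
        ⟨by rw [← hAa']; exact hAy, by rw [← hAa', ← hdE]; exact fun h => hEA h.symm,
          by rw [hyB, ← hdE]; exact fun h => hEB h.symm⟩
      have hqn : ¬ Separates q a y d := fun hs =>
        hqp (unique_sep hsep hay had hyd hqP hpP hs hpsep)
      have hqn' : ¬ Separates q a' y d := fun hs =>
        hqp (unique_sep hsep ha'y ha'd hyd hqP hpP hs hpsep')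
      have e1 : blk hq1 a = blk hq1 y := by
        by_contra h2
        refine hqn ((sep_iff hq1).2 ⟨h2, by rw [hdb]; exact hqab, by rw [hdb]; exact hne⟩)
      have e2 : blk hq1 a' = blk hq1 y := by
        by_contra h2
        refine hqn' ((sep_iff hq1).2 ⟨h2, by rw [hdb]; exact hqa'b, by rw [hdb]; exact hne⟩)
      exact hqaa' (e1.trans e2.symm)
    · exact key y hyA hyB
  refine ⟨q, hqP, hqsep, blk hq1 b, blk_mem hq1 b, mem_blk hq1 b, ?_, ?_, ?_⟩
  · intro y hy
    have := key2 y hy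
    rw [← this]
    exact mem_blk hq1 y
  · exact fun h => hqab (eq_blk hq1 (blk_mem hq1 b) h).symm
  · exact fun h => hqa'b (eq_blk hq1 (blk_mem hq1 b) h).symm

/-- Cross lemma: if `p ≠ q` share the part `A` and `b, c ∉ A` lie in distinct parts of
`p`, then they lie in the same part of `q`. -/
lemma cross {P : Set (Set (Set α))}
    (hP : ∀ p ∈ P, Setoid.IsPartition p ∧ 3 ≤ p.ncard)
    (hsep : ∀ a b c : α, a ≠ b → a ≠ c → b ≠ c → ∃! p, p ∈ P ∧ Separates p a b c)
    {p q : Set (Set α)} {A : Set α}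
    (hpP : p ∈ P) (hqP : q ∈ P) (hpq : p ≠ q) (hAp : A ∈ p) (hAq : A ∈ q)
    {a : α} (ha : a ∈ A) {b c : α} (hb : b ∉ A) (hc : c ∉ A)
    (hbc : blk (hP p hpP).1 b ≠ blk (hP p hpP).1 c) :
    blk (hP q hqP).1 b = blk (hP q hqP).1 c := by
  have hp1 := (hP p hpP).1
  have hq1 := (hP q hqP).1
  by_contra hne
  have hab : a ≠ b := fun h => hb (h ▸ ha)
  have hac : a ≠ c := fun h => hc (h ▸ ha)
  have hbc' : b ≠ c := fun h => hbc (by rw [h])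
  have hp_sep : Separates p a b c := (sep_iff hp1).2
    ⟨fun h => hb (by rw [(eq_blk hp1 hAp ha).trans h]; exact mem_blk hp1 b),
     fun h => hc (by rw [(eq_blk hp1 hAp ha).trans h]; exact mem_blk hp1 c), hbc⟩
  have hq_sep : Separates q a b c := (sep_iff hq1).2
    ⟨fun h => hb (by rw [(eq_blk hq1 hAq ha).trans h]; exact mem_blk hq1 b),
     fun h => hc (by rw [(eq_blk hq1 hAq ha).trans h]; exact mem_blk hq1 c), hne⟩
  exact hpq (unique_sep hsep hab hac hbc' hpP hqP hp_sep hq_sep)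

end Stmt17Aux

open Stmt17Aux in
/-- if every partition of a collection `P` has at least 3 parts and every
triple is separated by a unique partition of `P`, then `P` is phylogenetic: every
singleton is a part of some partition (P2), every subset is a part of at most one
partition (P3), and the complement of every part of cardinality at least 2 is also a
part of some partition (P4). -/
theorem stmt17 {α : Type*} [Fintype α] (hcard : 3 ≤ Fintype.card α)
    (P : Set (Set (Set α)))
    (hP : ∀ p ∈ P, Setoid.IsPartition p ∧ 3 ≤ p.ncard)
    (hsep : ∀ a b c : α, a ≠ b → a ≠ c → b ≠ c → ∃! p, p ∈ P ∧ Separates p a b c) :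
    (∀ i : α, ∃ p ∈ P, ({i} : Set α) ∈ p) ∧
    (∀ A : Set α, ∀ p ∈ P, ∀ q ∈ P, A ∈ p → A ∈ q → p = q) ∧
    (∀ p ∈ P, ∀ A ∈ p, 2 ≤ A.ncard → ∃ q ∈ P, Aᶜ ∈ q) := by
  refine ⟨?_, ?_, ?_⟩
  · -- P2: singletons
    intro i
    -- find three distinct elements, hence some partition in P
    obtain ⟨y, hy⟩ := Fintype.exists_ne_of_one_lt_card (by omega) i
    have hz : ({i, y} : Set α)ᶜ.Nonempty := by
      by_contra h
      rw [Set.not_nonempty_iff_eq_empty, Set.compl_empty_iff] at h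
      have h1 : ({i, y} : Set α).ncard ≤ 2 := by
        have := Set.ncard_insert_le i ({y} : Set α)
        simp only [Set.ncard_singleton] at this
        omega
      rw [h, Set.ncard_univ, Nat.card_eq_fintype_card] at h1
      omega
    obtain ⟨z, hzmem⟩ := hz
    simp only [Set.mem_compl_iff, Set.mem_insert_iff, Set.mem_singleton_iff, not_or] at hzmem
    obtain ⟨p0, ⟨hp0P, _⟩, _⟩ := hsep i y z (Ne.symm hy) (fun h => hzmem.1 h.symm)
      (fun h => hzmem.2 h.symm)
    -- minimize the size of the block containing i
    set S : Set ℕ := {n | ∃ q, ∃ hq : q ∈ P, n = (blk (hP q hq).1 i).ncard} with hSdef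
    have hSne : S.Nonempty := ⟨_, p0, hp0P, rfl⟩
    obtain ⟨p, hpP, hn⟩ := Nat.sInf_mem hSne
    set A : Set α := blk (hP p hpP).1 i with hAdef
    have hp1 := (hP p hpP).1
    suffices hA : A = {i} by exact ⟨p, hpP, hA ▸ blk_mem (hP p hpP).1 i⟩
    refine Set.eq_singleton_iff_unique_mem.2 ⟨mem_blk (hP p hpP).1 i, ?_⟩
    intro a haA
    by_contra hai
    -- get b ∉ A
    obtain ⟨E, hEp, hEA, _⟩ := third_part (hP p hpP).2 (blk_mem (hP p hpP).1 i)
      (blk_mem (hP p hpP).1 i)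
    obtain ⟨b, hbE⟩ := part_nonempty hp1 hEp
    have hbA : b ∉ A := fun h =>
      hEA ((eq_blk hp1 hEp hbE).trans (eq_blk hp1 (blk_mem hp1 i) h).symm)
    obtain ⟨q, hqP, hqsep, Q, hQq, hbQ, hAc, hiQ, haQ⟩ :=
      claim1 hP hsep hpP (blk_mem (hP p hpP).1 i) (mem_blk (hP p hpP).1 i) haA
        (fun h => hai h.symm) hbA
    have hq1 := (hP q hqP).1
    have hsub : blk hq1 i ⊆ A := by
      intro x hx
      by_contra hxA
      have e : blk hq1 i = Q :=
        (eq_blk hq1 (blk_mem hq1 i) hx).trans (eq_blk hq1 hQq (hAc hxA)).symm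
      exact hiQ (e ▸ mem_blk hq1 i)
    have hablk : a ∉ blk hq1 i := fun h =>
      ((sep_iff hq1).1 hqsep).1 (eq_blk hq1 (blk_mem hq1 i) h)
    have hss : blk hq1 i ⊂ A :=
      hsub.ssubset_of_ne (fun h => hablk (h.symm ▸ haA))
    have hlt : (blk hq1 i).ncard < A.ncard := Set.ncard_lt_ncard hss (Set.toFinite A)
    have hmem : (blk hq1 i).ncard ∈ S := ⟨q, hqP, rfl⟩
    have hle := Nat.sInf_le hmem
    omega
  · -- P3: a set is a part of at most one partition
    intro A p hpP q hqP hAp hAq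
    by_contra hpq
    have hp1 := (hP p hpP).1
    have hq1 := (hP q hqP).1
    obtain ⟨a, ha⟩ := part_nonempty hp1 hAp
    obtain ⟨Q1, hQ1, hQ1A, _⟩ := third_part (hP q hqP).2 hAq hAq
    obtain ⟨Q2, hQ2, hQ2A, hQ21⟩ := third_part (hP q hqP).2 hAq hQ1
    obtain ⟨b, hb⟩ := part_nonempty hq1 hQ1
    obtain ⟨c, hc⟩ := part_nonempty hq1 hQ2
    have hbA : b ∉ A := fun h => hQ1A ((eq_blk hq1 hQ1 hb).trans (eq_blk hq1 hAq h).symm)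
    have hcA : c ∉ A := fun h => hQ2A ((eq_blk hq1 hQ2 hc).trans (eq_blk hq1 hAq h).symm)
    have hq_bc : blk (hP q hqP).1 b ≠ blk (hP q hqP).1 c := by
      rw [← eq_blk hq1 hQ1 hb, ← eq_blk hq1 hQ2 hc]
      exact fun h => hQ21 h.symm
    have hp_bc : blk (hP p hpP).1 b = blk (hP p hpP).1 c :=
      cross hP hsep hqP hpP (Ne.symm hpq) hAq hAp ha hbA hcA hq_bc
    obtain ⟨E, hEp, hEA, hEB⟩ := third_part (hP p hpP).2 hAp (blk_mem hp1 b)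
    obtain ⟨d, hd⟩ := part_nonempty hp1 hEp
    have hdA : d ∉ A := fun h => hEA ((eq_blk hp1 hEp hd).trans (eq_blk hp1 hAp h).symm)
    have h1 : blk (hP p hpP).1 d ≠ blk (hP p hpP).1 b := by
      rw [← eq_blk hp1 hEp hd]
      exact hEB
    have h2 : blk (hP p hpP).1 d ≠ blk (hP p hpP).1 c := hp_bc ▸ h1
    have r1 : blk (hP q hqP).1 d = blk (hP q hqP).1 b :=
      cross hP hsep hpP hqP hpq hAp hAq ha hdA hbA h1
    have r2 : blk (hP q hqP).1 d = blk (hP q hqP).1 c :=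
      cross hP hsep hpP hqP hpq hAp hAq ha hdA hcA h2
    exact hq_bc (r1.symm.trans r2)
  · -- P4: complements of parts of size ≥ 2
    intro p hpP A hAp h2A
    have hp1 := (hP p hpP).1
    obtain ⟨a, ha⟩ := Set.nonempty_of_ncard_ne_zero (s := A) (by omega)
    obtain ⟨a', ha', haa'⟩ := Set.exists_ne_of_one_lt_ncard (s := A) (by omega) a
    obtain ⟨B0, hB0, hB0A, _⟩ := third_part (hP p hpP).2 hAp hAp
    obtain ⟨b, hbB0⟩ := part_nonempty hp1 hB0
    have hbA : b ∉ A := fun h => hB0A ((eq_blk hp1 hB0 hbB0).trans (eq_blk hp1 hAp h).symm)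
    set S : Set ℕ := {n | ∃ q, ∃ _ : q ∈ P, ∃ Q ∈ q, Aᶜ ⊆ Q ∧ n = Q.ncard} with hSdef
    have hSne : S.Nonempty := by
      obtain ⟨q, hqP, _, Q, hQq, _, hsub, _, _⟩ :=
        claim1 hP hsep hpP hAp ha ha' (Ne.symm haa') hbA
      exact ⟨Q.ncard, q, hqP, Q, hQq, hsub, rfl⟩
    obtain ⟨q, hqP, Q, hQq, hQA, hn⟩ := Nat.sInf_mem hSne
    have hq1 := (hP q hqP).1
    refine ⟨q, hqP, ?_⟩
    suffices h : Q = Aᶜ by rwa [← h]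
    refine subset_antisymm ?_ hQA
    by_contra hnsub
    rw [Set.not_subset] at hnsub
    obtain ⟨x, hxQ, hxA'⟩ := hnsub
    have hxA : x ∈ A := by simpa using hxA'
    obtain ⟨R0, hR0, hR0Q, _⟩ := third_part (hP q hqP).2 hQq hQq
    obtain ⟨a0, ha0R0⟩ := part_nonempty hq1 hR0
    have ha0Q : a0 ∉ Q := fun h =>
      hR0Q ((eq_blk hq1 hR0 ha0R0).trans (eq_blk hq1 hQq h).symm)
    have ha0A : a0 ∈ A := by
      by_contra h
      exact ha0Q (hQA h)
    have hbQ : b ∈ Q := hQA hbA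
    have hxb : x ≠ b := fun h => hbA (h ▸ hxA)
    have ha0x : a0 ≠ x := fun h => ha0Q (h ▸ hxQ)
    have ha0b : a0 ≠ b := fun h => ha0Q (h ▸ hbQ)
    obtain ⟨q', hq'P, hsep1, Q', hQ'q', hbQ', hAQc', ha0Q', hxQ'⟩ :=
      claim1 hP hsep hpP hAp ha0A hxA ha0x hbA
    obtain ⟨r, hrP, hsep2, R, hRr, ha0R, hQcR, hxR, hbR⟩ :=
      claim1 hP hsep hqP hQq hxQ hbQ hxb ha0Q
    have hq'1 := (hP q' hq'P).1
    have hr1 := (hP r hrP).1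
    obtain ⟨e21, e22, e23⟩ := (sep_iff hr1).1 hsep2
    have hsep2' : Separates r a0 x b := (sep_iff hr1).2
      ⟨fun h => e22 h.symm, fun h => e23 h.symm, e21⟩
    have hrq' : q' = r := unique_sep hsep ha0x ha0b hxb hq'P hrP hsep1 hsep2'
    subst hrq'
    have hQ'R : Q' ≠ R := fun h => hbR (h ▸ hbQ')
    have hQ'sub : Q' ⊆ Q := by
      intro z hz
      by_contra hzQ
      exact hQ'R ((eq_blk hq'1 hQ'q' hz).trans (eq_blk hq'1 hRr (hQcR hzQ)).symm)
    have hss : Q' ⊂ Q := hQ'sub.ssubset_of_ne (fun h => hxQ' (h.symm ▸ hxQ))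
    have hmem : Q'.ncard ∈ S := ⟨q', hq'P, Q', hQ'q', hAQc', rfl⟩
    have hle := Nat.sInf_le hmem
    have hlt := Set.ncard_lt_ncard hss (Set.toFinite Q)
    omega
end

section
/- Let S be a diverse set of triples of N, and let G_S be the graph on vertex set N where i and j are adjacent iff i ≠ j and no triple in S contains both i and j. Then G_S is a disjoint union of complete graphs (i.e., adjacency together with equality is an equivalence relation). -/
open Set

/-- A set `S` of triples (3-element subsets) of `α` is diverse: it is nonempty, all its
elements are triples, and axioms (D1) and (D2) hold. -/
def Diverse {α : Type*} [DecidableEq α] (S : Set (Finset α)) : Prop :=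
  S.Nonempty ∧ (∀ t ∈ S, t.card = 3) ∧
  (∀ i j k l : α, ({i, j, k} : Finset α) ∈ S →
    ({i, j, l} : Finset α) ∈ S ∨ ({i, k, l} : Finset α) ∈ S ∨
      ({j, k, l} : Finset α) ∈ S) ∧
  (∀ a b c x y z : α, ({a, x, y} : Finset α) ∈ S → ({b, y, z} : Finset α) ∈ S →
    ({c, x, z} : Finset α) ∈ S → ({x, y, z} : Finset α) ∈ S)

/-- The graph `G_S` on `α`: `i` and `j` are adjacent iff `i ≠ j` and no triple of `S`
contains both `i` and `j`. -/
def GS {α : Type*} (S : Set (Finset α)) : SimpleGraph α where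
  Adj i j := i ≠ j ∧ ∀ t ∈ S, ¬(i ∈ t ∧ j ∈ t)
  symm := ⟨fun i j ⟨hne, h⟩ => ⟨hne.symm, fun t ht h2 => h t ht ⟨h2.2, h2.1⟩⟩⟩
  loopless := ⟨fun i h => h.1 rfl⟩

theorem Finset.exists_eq_insert_insert_singleton_of_card_eq_three {α : Type*} [DecidableEq α]
    {t : Finset α} (ht : t.card = 3) {i k : α} (hi : i ∈ t) (hk : k ∈ t) (hik : i ≠ k) :
    ∃ m, t = {i, k, m} := by
  have hk' : k ∈ t.erase i := Finset.mem_erase.mpr ⟨hik.symm, hk⟩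
  have hcard : ((t.erase i).erase k).card = 1 := by
    rw [Finset.card_erase_of_mem hk', Finset.card_erase_of_mem hi, ht]
  obtain ⟨m, hm⟩ := Finset.card_eq_one.mp hcard
  exact ⟨m, by rw [← hm, Finset.insert_erase hk', Finset.insert_erase hi]⟩

/-- A triple `{i, k, m}` of `S` meeting the non-edges `ij` and `jk` would, by (D1) with `l = j`,
force a triple of `S` through `i, j` or through `j, k`. -/
theorem GS_adj_of_adj_of_adj {α : Type*} [DecidableEq α] {S : Set (Finset α)}
    (hcard : ∀ t ∈ S, t.card = 3)
    (hD1 : ∀ i j k l : α, ({i, j, k} : Finset α) ∈ S →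
      ({i, j, l} : Finset α) ∈ S ∨ ({i, k, l} : Finset α) ∈ S ∨ ({j, k, l} : Finset α) ∈ S)
    {i j k : α} (hik : i ≠ k) (hij : (GS S).Adj i j) (hjk : (GS S).Adj j k) :
    (GS S).Adj i k := by
  refine ⟨hik, fun t ht ⟨hit, hkt⟩ => ?_⟩
  obtain ⟨m, rfl⟩ :=
    Finset.exists_eq_insert_insert_singleton_of_card_eq_three (hcard t ht) hit hkt hik
  rcases hD1 i k m j ht with h | h | h
  · exact hij.2 _ h ⟨by simp, by simp⟩
  · exact hij.2 _ h ⟨by simp, by simp⟩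
  · exact hjk.2 _ h ⟨by simp, by simp⟩

theorem stmt18_general {α : Type*} [DecidableEq α]
    (S : Set (Finset α)) (hS : Diverse S) :
    Equivalence (fun i j : α => i = j ∨ (GS S).Adj i j) := by
  obtain ⟨-, hcard, hD1, -⟩ := hS
  refine ⟨fun _ => Or.inl rfl, ?_, ?_⟩
  · rintro i j (rfl | h)
    exacts [Or.inl rfl, Or.inr h.symm]
  · rintro i j k (rfl | hij) (rfl | hjk)
    · exact Or.inl rfl
    · exact Or.inr hjk
    · exact Or.inr hij
    · by_cases hik : i = k
      · exact Or.inl hik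
      · exact Or.inr (GS_adj_of_adj_of_adj hcard hD1 hik hij hjk)

/-- for a diverse set `S` of triples, the graph `G_S` is a disjoint union
of complete graphs, i.e. adjacency together with equality is an equivalence relation. -/
theorem stmt18 {α : Type*} [Fintype α] [DecidableEq α] (hcard : 3 ≤ Fintype.card α)
    (S : Set (Finset α)) (hS : Diverse S) :
    Equivalence (fun i j : α => i = j ∨ (GS S).Adj i j) :=
  stmt18_general S hS
end

section
/- Let S be a diverse set of triples of N, and let p_S be the partition of N whose parts are the connected components of the graph G_S (where i,j are adjacent iff no triple of S contains both). Then p_S has at least three parts, and the set of triples separated by p_S is exactly S. Conversely, for any partition p of N with at least three parts, the set S_p of triples separated by p is diverse, and the partition determined by the components of G_{S_p} equals p. -/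
open Set

/-- The partition `p_S` of `α` whose parts are the connected components of `G_S`. -/
def pS {α : Type*} (S : Set (Finset α)) : Set (Set α) :=
  {A : Set α | ∃ i : α, A = {j : α | (GS S).Reachable i j}}

/-- The set `S_p` of triples separated by a partition `p`. -/
def Sp {α : Type*} [DecidableEq α] (p : Set (Set α)) : Set (Finset α) :=
  {t : Finset α | ∃ i j k : α, i ≠ j ∧ i ≠ k ∧ j ≠ k ∧
    t = ({i, j, k} : Finset α) ∧ Separates p i j k}

/-!
For a diverse `S`, axiom (D1) makes the relation "`i = j` or no triple of `S` contains both"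
transitive, so it is exactly reachability in `G_S`, and its classes are the parts of `p_S`.
Hence three distinct points lie in distinct parts iff each two of them share a triple of `S`,
and (D2) turns three such triples into the triple `{x, y, z}` itself.

Conversely, a partition `p` is the set of classes of an equivalence `r`, and a triple is
separated iff its points are pairwise `r`-inequivalent. Since `p` has a third part, two distinct
points share a separated triple iff they are `r`-inequivalent, so `G_{S_p}` joins exactly the
distinct `r`-equivalent pairs and its components are the classes of `r`.
-/

section Triples

variable {α : Type*} [DecidableEq α]

lemma ne_of_card_triple_eq_three {i j k : α} (h : ({i, j, k} : Finset α).card = 3) :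
    i ≠ j ∧ i ≠ k ∧ j ≠ k := by
  refine ⟨?_, ?_, ?_⟩ <;> rintro rfl <;>
    simp only [Finset.mem_insert, Finset.mem_singleton, true_or, or_true,
      Finset.insert_eq_of_mem] at h <;>
    exact absurd (h ▸ Finset.card_le_two) (by norm_num)

lemma exists_eq_triple_of_mem {t : Finset α} (ht : t.card = 3) {i j : α} (hi : i ∈ t)
    (hj : j ∈ t) (hij : i ≠ j) : ∃ m, t = {m, i, j} := by
  have hj' : j ∈ t.erase i := Finset.mem_erase.2 ⟨hij.symm, hj⟩
  obtain ⟨m, hm⟩ : ∃ m, (t.erase i).erase j = {m} := by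
    rw [← Finset.card_eq_one, Finset.card_erase_of_mem hj', Finset.card_erase_of_mem hi, ht]
  refine ⟨m, ?_⟩
  rw [Finset.insert_comm, Finset.pair_comm, ← hm, Finset.insert_erase hj', Finset.insert_erase hi]

end Triples

section Classes

variable {α : Type*} (r : Setoid α)

lemma Setoid.setOf_rel_eq_iff {i j : α} : {x | r x i} = {x | r x j} ↔ r i j := by
  refine ⟨fun h => (Set.ext_iff.1 h i).1 (r.refl i), fun h => Set.ext fun x => ?_⟩
  exact ⟨fun hx => r.trans hx h, fun hx => r.trans hx (r.symm h)⟩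

lemma separates_classes_iff {i j k : α} :
    Separates r.classes i j k ↔ ¬ r i j ∧ ¬ r i k ∧ ¬ r j k := by
  constructor
  · rintro ⟨_, ⟨a, rfl⟩, _, ⟨b, rfl⟩, _, ⟨c, rfl⟩, hia, hjb, hkc, hab, hac, hbc⟩
    rw [Ne, r.setOf_rel_eq_iff] at hab hac hbc
    exact ⟨fun h => hab (r.trans (r.trans (r.symm hia) h) hjb),
      fun h => hac (r.trans (r.trans (r.symm hia) h) hkc),
      fun h => hbc (r.trans (r.trans (r.symm hjb) h) hkc)⟩
  · rintro ⟨hij, hik, hjk⟩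
    refine ⟨_, r.mem_classes i, _, r.mem_classes j, _, r.mem_classes k, r.refl i, r.refl j,
      r.refl k, ?_, ?_, ?_⟩ <;> rwa [Ne, r.setOf_rel_eq_iff]

lemma Setoid.exists_not_rel_of_three_le_ncard_classes (h3 : 3 ≤ r.classes.ncard) (i j : α) :
    ∃ k, ¬ r i k ∧ ¬ r j k := by
  by_contra! h
  have hsub : r.classes ⊆ {{x | r x i}, {x | r x j}} := by
    rintro _ ⟨y, rfl⟩
    by_cases hiy : r i y
    · exact Or.inl ((r.setOf_rel_eq_iff).2 (r.symm hiy))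
    · exact Or.inr ((r.setOf_rel_eq_iff).2 (r.symm (h y hiy)))
  have := (Set.ncard_le_ncard hsub).trans (Set.ncard_insert_le _ _)
  rw [Set.ncard_singleton] at this
  omega

end Classes

lemma three_le_ncard_of_separates {α : Type*} {p : Set (Set α)} (hp : p.Finite) {i j k : α}
    (h : Separates p i j k) : 3 ≤ p.ncard := by
  obtain ⟨A, hA, B, hB, D, hD, -, -, -, hAB, hAD, hBD⟩ := h
  calc 3 = ({A, B, D} : Set (Set α)).ncard :=
        (Set.ncard_eq_three.2 ⟨A, B, D, hAB, hAD, hBD, rfl⟩).symm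
    _ ≤ p.ncard := Set.ncard_le_ncard (by simp [Set.insert_subset_iff, hA, hB, hD]) hp

lemma SimpleGraph.reachableSetoid_eq_of_adj_iff {V : Type*} {G : SimpleGraph V} {r : Setoid V}
    (h : ∀ i j, G.Adj i j ↔ i ≠ j ∧ r i j) : G.reachableSetoid = r := by
  refine Setoid.ext fun i j => ⟨fun hij => ?_, fun hij => ?_⟩
  · obtain ⟨w⟩ := hij
    induction w with
    | nil => exact r.refl _
    | cons hadj _ ih => exact r.trans ((h _ _).1 hadj).2 ih
  · by_cases hne : i = j
    · exact hne ▸ SimpleGraph.Reachable.refl i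
    · exact ((h i j).2 ⟨hne, hij⟩).reachable

section Components

variable {α : Type*}

lemma pS_eq_classes (S : Set (Finset α)) : pS S = (GS S).reachableSetoid.classes := by
  ext A
  refine exists_congr fun i => ?_
  rw [show {x | (GS S).reachableSetoid x i} = {j | (GS S).Reachable i j} from
    Set.ext fun _ => SimpleGraph.reachable_comm]

def Together (S : Set (Finset α)) (i j : α) : Prop := ∃ t ∈ S, i ∈ t ∧ j ∈ t

lemma Together.symm {S : Set (Finset α)} {i j : α} (h : Together S i j) : Together S j i :=
  let ⟨t, ht, hi, hj⟩ := h; ⟨t, ht, hj, hi⟩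

lemma GS_adj_iff {S : Set (Finset α)} {i j : α} :
    (GS S).Adj i j ↔ i ≠ j ∧ ¬ Together S i j := by
  simp [GS, Together]

end Components

namespace Diverse

variable {α : Type*} [DecidableEq α] {S : Set (Finset α)}

lemma not_together_trans (hS : Diverse S) {i j k : α} (hij : ¬ Together S i j)
    (hjk : ¬ Together S j k) (hik : i ≠ k) : ¬ Together S i k := by
  rintro ⟨t, ht, hi, hk⟩
  obtain ⟨m, rfl⟩ := exists_eq_triple_of_mem (hS.2.1 t ht) hi hk hik
  rcases hS.2.2.1 m i k j ht with h | h | h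
  · exact hij ⟨_, h, by simp, by simp⟩
  · exact hjk ⟨_, h, by simp, by simp⟩
  · exact hij ⟨_, h, by simp, by simp⟩

def notTogetherSetoid (hS : Diverse S) : Setoid α where
  r i j := i = j ∨ ¬ Together S i j
  iseqv := by
    refine ⟨fun _ => Or.inl rfl, ?_, ?_⟩
    · rintro i j (rfl | h)
      exacts [Or.inl rfl, Or.inr fun h' => h h'.symm]
    · rintro i j k (rfl | hij) (rfl | hjk)
      · exact Or.inl rfl
      · exact Or.inr hjk
      · exact Or.inr hij
      · exact or_iff_not_imp_left.2 (hS.not_together_trans hij hjk)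

lemma reachableSetoid_eq (hS : Diverse S) : (GS S).reachableSetoid = hS.notTogetherSetoid :=
  SimpleGraph.reachableSetoid_eq_of_adj_iff fun i j => by
    rw [GS_adj_iff]
    change _ ↔ i ≠ j ∧ (i = j ∨ _)
    tauto

lemma mem_of_together (hS : Diverse S) {i j k : α} (hij : i ≠ j) (hik : i ≠ k) (hjk : j ≠ k)
    (hTij : Together S i j) (hTjk : Together S j k) (hTik : Together S i k) :
    ({i, j, k} : Finset α) ∈ S := by
  obtain ⟨t₁, ht₁, hi₁, hj₁⟩ := hTij
  obtain ⟨t₂, ht₂, hj₂, hk₂⟩ := hTjk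
  obtain ⟨t₃, ht₃, hi₃, hk₃⟩ := hTik
  obtain ⟨a, rfl⟩ := exists_eq_triple_of_mem (hS.2.1 t₁ ht₁) hi₁ hj₁ hij
  obtain ⟨b, rfl⟩ := exists_eq_triple_of_mem (hS.2.1 t₂ ht₂) hj₂ hk₂ hjk
  obtain ⟨c, rfl⟩ := exists_eq_triple_of_mem (hS.2.1 t₃ ht₃) hi₃ hk₃ hik
  exact hS.2.2.2 a b c i j k ht₁ ht₂ ht₃

lemma mem_iff_separates (hS : Diverse S) {i j k : α} (hij : i ≠ j) (hik : i ≠ k)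
    (hjk : j ≠ k) : ({i, j, k} : Finset α) ∈ S ↔ Separates (pS S) i j k := by
  rw [pS_eq_classes, hS.reachableSetoid_eq, separates_classes_iff]
  change _ ↔ ¬(i = j ∨ _) ∧ ¬(i = k ∨ _) ∧ ¬(j = k ∨ _)
  simp only [hij, hik, hjk, false_or, not_not]
  refine ⟨fun ht => ⟨⟨_, ht, by simp, by simp⟩, ⟨_, ht, by simp, by simp⟩,
    ⟨_, ht, by simp, by simp⟩⟩, fun ⟨hTij, hTik, hTjk⟩ => ?_⟩
  exact hS.mem_of_together hij hik hjk hTij hTjk hTik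

lemma three_le_ncard_pS [Finite α] (hS : Diverse S) : 3 ≤ (pS S).ncard := by
  obtain ⟨t, ht⟩ := hS.1
  obtain ⟨i, j, k, hij, hik, hjk, rfl⟩ := Finset.card_eq_three.1 (hS.2.1 t ht)
  exact three_le_ncard_of_separates (Set.toFinite _) ((hS.mem_iff_separates hij hik hjk).1 ht)

end Diverse

lemma card_eq_three_of_mem_Sp {α : Type*} [DecidableEq α] {p : Set (Set α)} {t : Finset α}
    (ht : t ∈ Sp p) : t.card = 3 := by
  obtain ⟨i, j, k, hij, hik, hjk, rfl, -⟩ := ht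
  exact Finset.card_eq_three.2 ⟨i, j, k, hij, hik, hjk, rfl⟩

section SeparatedByClasses

variable {α : Type*} [DecidableEq α] {r : Setoid α}

lemma not_rel_of_mem_triple {i j k : α} (h : ¬ r i j ∧ ¬ r i k ∧ ¬ r j k) {x y : α}
    (hx : x ∈ ({i, j, k} : Finset α)) (hy : y ∈ ({i, j, k} : Finset α)) (hxy : x ≠ y) :
    ¬ r x y := by
  obtain ⟨hij, hik, hjk⟩ := h
  simp only [Finset.mem_insert, Finset.mem_singleton] at hx hy
  rcases hx with rfl | rfl | rfl <;> rcases hy with rfl | rfl | rfl <;>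
    first
    | exact absurd rfl hxy
    | assumption
    | exact fun h => hij (r.symm h)
    | exact fun h => hik (r.symm h)
    | exact fun h => hjk (r.symm h)

lemma mem_Sp_classes_iff {i j k : α} :
    ({i, j, k} : Finset α) ∈ Sp r.classes ↔ ¬ r i j ∧ ¬ r i k ∧ ¬ r j k := by
  constructor
  · rintro ⟨i', j', k', hij', hik', hjk', heq, hsep⟩
    obtain ⟨hij, hik, hjk⟩ := ne_of_card_triple_eq_three
      (heq ▸ Finset.card_eq_three.2 ⟨i', j', k', hij', hik', hjk', rfl⟩)
    have hmem : ∀ x ∈ ({i, j, k} : Finset α), ∀ y ∈ ({i, j, k} : Finset α),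
        x ≠ y → ¬ r x y := by
      rw [heq]
      exact fun x hx y hy => not_rel_of_mem_triple ((separates_classes_iff r).1 hsep) hx hy
    exact ⟨hmem i (by simp) j (by simp) hij, hmem i (by simp) k (by simp) hik,
      hmem j (by simp) k (by simp) hjk⟩
  · intro h
    have hne : ∀ {x y : α}, ¬ r x y → x ≠ y := fun hxy e => hxy (e ▸ r.refl _)
    exact ⟨i, j, k, hne h.1, hne h.2.1, hne h.2.2, rfl, (separates_classes_iff r).2 h⟩

lemma together_Sp_classes_iff (h3 : 3 ≤ r.classes.ncard) {i j : α} (hij : i ≠ j) :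
    Together (Sp r.classes) i j ↔ ¬ r i j := by
  constructor
  · rintro ⟨t, ht, hi, hj⟩
    obtain ⟨m, rfl⟩ := exists_eq_triple_of_mem (card_eq_three_of_mem_Sp ht) hi hj hij
    exact (mem_Sp_classes_iff.1 ht).2.2
  · intro h
    obtain ⟨k, hik, hjk⟩ := r.exists_not_rel_of_three_le_ncard_classes h3 i j
    exact ⟨_, mem_Sp_classes_iff.2 ⟨h, hik, hjk⟩, by simp, by simp⟩

lemma diverse_Sp_classes (h3 : 3 ≤ r.classes.ncard) : Diverse (Sp r.classes) := by
  refine ⟨?_, fun t ht => card_eq_three_of_mem_Sp ht, fun i j k l ht => ?_,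
    fun a b c x y z h₁ h₂ h₃ => ?_⟩
  · obtain ⟨_, i, rfl⟩ := Set.nonempty_of_ncard_ne_zero (by omega : r.classes.ncard ≠ 0)
    obtain ⟨j, hij, -⟩ := r.exists_not_rel_of_three_le_ncard_classes h3 i i
    obtain ⟨k, hik, hjk⟩ := r.exists_not_rel_of_three_le_ncard_classes h3 i j
    exact ⟨_, mem_Sp_classes_iff.2 ⟨hij, hik, hjk⟩⟩
  · obtain ⟨hij, hik, hjk⟩ := mem_Sp_classes_iff.1 ht
    simp only [mem_Sp_classes_iff]
    by_cases hil : r i l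
    · exact Or.inr (Or.inr ⟨hjk, fun h => hij (r.trans hil (r.symm h)),
        fun h => hik (r.trans hil (r.symm h))⟩)
    by_cases hjl : r j l
    · exact Or.inr (Or.inl ⟨hik, hil, fun h => hjk (r.trans hjl (r.symm h))⟩)
    · exact Or.inl ⟨hij, hil, hjl⟩
  · rw [mem_Sp_classes_iff] at h₁ h₂ h₃ ⊢
    exact ⟨h₁.2.2, h₃.2.2, h₂.2.2⟩

lemma pS_Sp_classes (h3 : 3 ≤ r.classes.ncard) : pS (Sp r.classes) = r.classes := by
  rw [pS_eq_classes, SimpleGraph.reachableSetoid_eq_of_adj_iff fun i j => ?_]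
  rw [GS_adj_iff]
  exact and_congr_right fun hij => by rw [together_Sp_classes_iff h3 hij, not_not]

end SeparatedByClasses

theorem stmt19_general {α : Type*} [Fintype α] [DecidableEq α] :
    (∀ S : Set (Finset α), Diverse S →
      3 ≤ (pS S).ncard ∧
      ∀ i j k : α, i ≠ j → i ≠ k → j ≠ k →
        (({i, j, k} : Finset α) ∈ S ↔ Separates (pS S) i j k)) ∧
    (∀ p : Set (Set α), Setoid.IsPartition p → 3 ≤ p.ncard →
      Diverse (Sp p) ∧ pS (Sp p) = p) := by
  refine ⟨fun S hS => ⟨hS.three_le_ncard_pS, fun i j k => hS.mem_iff_separates⟩,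
    fun p hp h3 => ?_⟩
  obtain ⟨r, rfl⟩ : ∃ r : Setoid α, r.classes = p := ⟨_, Setoid.classes_mkClasses p hp⟩
  exact ⟨diverse_Sp_classes h3, pS_Sp_classes h3⟩

/-- for a diverse set `S` of triples, `p_S` has at least three parts and
the set of triples separated by `p_S` is exactly `S`; conversely, for any partition `p`
with at least three parts, the set `S_p` of triples separated by `p` is diverse and the
partition determined by the components of `G_{S_p}` is `p`. -/
theorem stmt19 {α : Type*} [Fintype α] [DecidableEq α] (hcard : 3 ≤ Fintype.card α) :
    (∀ S : Set (Finset α), Diverse S →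
      3 ≤ (pS S).ncard ∧
      ∀ i j k : α, i ≠ j → i ≠ k → j ≠ k →
        (({i, j, k} : Finset α) ∈ S ↔ Separates (pS S) i j k)) ∧
    (∀ p : Set (Set α), Setoid.IsPartition p → 3 ≤ p.ncard →
      Diverse (Sp p) ∧ pS (Sp p) = p) :=
  stmt19_general
end
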